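/- arXiv:2402.15169 — 11 statements merged into one kernel-verified Lean document; each statement's English description precedes it below -/
import Mathlib

section
/- There exist a constant c > 0 and an integer k₀ such that for every k ≥ k₀, every persuasive identity-independent signaling scheme (with any finite signal space Σ ⊆ [0,1]) on the double-star graph with parameter k has cost at least c · √n, where n = 2k + 2 is the number of vertices; meanwhile OPT ≤ 2 on this graph. -/
open Finset

variable {V : Type*}

/-- A collaboration instance: symmetric matrix with entries in [0,1] and unit diagonal. -/
def IsCollab [Fintype V] (W : V → V → ℝ) : Prop :=
  (∀ u v, W u v = W v u) ∧ (∀ u v, 0 ≤ W u v ∧ W u v ≤ 1) ∧ (∀ v, W v v = 1)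

/-- Unit-weight instance: off-diagonal entries are 0 or 1. -/
def UnitWeight (W : V → V → ℝ) : Prop :=
  ∀ u v : V, u ≠ v → W u v = 0 ∨ W u v = 1

/-- Feasible solution: nonnegative with `W θ ≥ 1` coordinatewise. -/
def Feasible [Fintype V] (W : V → V → ℝ) (θ : V → ℝ) : Prop :=
  (∀ v, 0 ≤ θ v) ∧ ∀ v, 1 ≤ ∑ u, W v u * θ u

/-- Optimal total workload among feasible solutions. -/
noncomputable def OPT [Fintype V] (W : V → V → ℝ) : ℝ :=
  sInf {c : ℝ | ∃ θ : V → ℝ, Feasible W θ ∧ c = ∑ v, θ v}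

/-- Optimal total workload among feasible solutions satisfying IR (`θ ≤ 1`). -/
noncomputable def OPTIR [Fintype V] (W : V → V → ℝ) : ℝ :=
  sInf {c : ℝ | ∃ θ : V → ℝ, Feasible W θ ∧ (∀ v, θ v ≤ 1) ∧ c = ∑ v, θ v}

/-- An identity-independent signaling scheme: a finitely supported probability
distribution over signal functions `s : V → ℝ` whose values lie in a finite
signal space `sig ⊆ [0,1]`. -/
structure Scheme (V : Type*) [Fintype V] where
  sig : Finset ℝ
  sig_mem : ∀ θ ∈ sig, 0 ≤ θ ∧ θ ≤ 1
  supp : Finset (V → ℝ)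
  val_mem : ∀ s ∈ supp, ∀ v : V, s v ∈ sig
  p : (V → ℝ) → ℝ
  p_nonneg : ∀ s ∈ supp, 0 ≤ p s
  p_sum : ∑ s ∈ supp, p s = 1

/-- Expectation of `f` under the scheme's distribution. -/
noncomputable def Scheme.exp [Fintype V] (D : Scheme V) (f : (V → ℝ) → ℝ) : ℝ :=
  ∑ s ∈ D.supp, D.p s * f s

/-- Expected number of vertices receiving signal `θ`. -/
noncomputable def Scheme.Num [Fintype V] (D : Scheme V) (θ : ℝ) : ℝ :=
  D.exp (fun s => ∑ v, if s v = θ then (1 : ℝ) else 0)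

/-- Expected total contribution entering vertices receiving signal `θ`
(the neighborhood sum `∑_{u ∈ N(v)} W v u * s u` equals `∑_{u ≠ v} W v u * s u`). -/
noncomputable def Scheme.Contrib [Fintype V] [DecidableEq V] (D : Scheme V)
    (W : V → V → ℝ) (θ : ℝ) : ℝ :=
  D.exp (fun s => ∑ v, if s v = θ then ∑ u ∈ Finset.univ.erase v, W v u * s u else 0)

/-- The slack of signal `θ`. -/
noncomputable def Scheme.slack [Fintype V] [DecidableEq V] (D : Scheme V)
    (W : V → V → ℝ) (θ : ℝ) : ℝ :=
  D.Contrib W θ - (1 - θ) * D.Num θ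

/-- Persuasiveness: zero slack at positive signals, nonnegative slack at signal 0. -/
def Scheme.Persuasive [Fintype V] [DecidableEq V] (D : Scheme V) (W : V → V → ℝ) : Prop :=
  (∀ θ ∈ D.sig, 0 < θ → D.slack W θ = 0) ∧ ((0 : ℝ) ∈ D.sig → 0 ≤ D.slack W 0)

/-- Cost of a scheme: expected total signal value. -/
noncomputable def Scheme.cost [Fintype V] (D : Scheme V) : ℝ :=
  D.exp (fun s => ∑ v, s v)

/-- The double-star graph with parameter `k`: vertices `(i, j)` for `i ∈ Fin 2`,
`j ∈ Fin (k+1)`, where `(i, 0)` are the two centers (adjacent to each other and to the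
`k` leaves `(i, j)`, `j ≥ 1`, of their own star). -/
noncomputable def doubleStarW (k : ℕ) : (Fin 2 × Fin (k+1)) → (Fin 2 × Fin (k+1)) → ℝ :=
  fun p q =>
    if p = q then 1
    else if p.2 = 0 ∧ q.2 = 0 then 1
    else if p.1 = q.1 ∧ (p.2 = 0 ∨ q.2 = 0) then 1
    else 0


/-- Dual weight function. -/
noncomputable def ww (M θ : ℝ) : ℝ :=
  if θ ≤ 1/2 then 1/4
  else if M * (1 - θ) ≤ θ - 1/2 then -M
  else -((θ - 1/2) / (1 - θ))

lemma ww_low {M θ : ℝ} (h : θ ≤ 1/2) : ww M θ = 1/4 := if_pos h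

lemma ww_high {M θ : ℝ} (hM : 1 ≤ M) (h2 : 1/2 < θ) :
    0 ≤ -ww M θ ∧ (-ww M θ) * (1 - θ) ≤ θ - 1/2 := by
  unfold ww
  rw [if_neg (not_le.2 h2)]
  split_ifs with h
  · exact ⟨by simp; linarith, by simpa using h⟩
  · push_neg at h
    have h1θ : 0 < 1 - θ := by
      by_contra hc
      push_neg at hc
      nlinarith
    constructor
    · simp only [neg_neg]
      exact div_nonneg (by linarith) h1θ.le
    · simp only [neg_neg]
      rw [div_mul_cancel₀ _ (ne_of_gt h1θ)]

lemma ww_ultra {M θ : ℝ} (hM : 1 ≤ M) (hθ1 : θ ≤ 1) (h : M * (1 - θ) ≤ 1/4) :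
    ww M θ = -M := by
  have hθ : 3/4 ≤ θ := by nlinarith [(mul_nonneg (by linarith : (0:ℝ) ≤ M - 1) (by linarith : (0:ℝ) ≤ 1 - θ))]
  unfold ww
  rw [if_neg (by linarith), if_pos (by linarith)]

/-- Per-leaf dual contribution. -/
noncomputable def hterm (M b t : ℝ) : ℝ := t - ww M b * t - ww M t * (b - 1 + t)

/-- Per-leaf lower bound. -/
noncomputable def lterm (b : ℝ) : ℝ := if b ≤ 1/2 then 1/8 else (1 - b) / 4

lemma lterm_nonneg {b : ℝ} (hb1 : b ≤ 1) : 0 ≤ lterm b := by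
  unfold lterm; split_ifs <;> linarith

lemma hterm_ge {M b t : ℝ} (hM : 1 ≤ M) (hb0 : 0 ≤ b) (hb1 : b ≤ 1)
    (ht0 : 0 ≤ t) (ht1 : t ≤ 1) : lterm b ≤ hterm M b t := by
  unfold hterm lterm
  rcases le_or_gt b (1/2) with hb | hb <;> rcases le_or_gt t (1/2) with ht | ht
  · rw [if_pos hb, ww_low hb, ww_low ht]; linarith
  · rw [if_pos hb, ww_low hb]
    obtain ⟨hg0, hg1⟩ := ww_high hM ht
    have h1 : (-ww M t) * b ≥ 0 := mul_nonneg hg0 hb0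
    nlinarith
  · rw [if_neg (not_le.2 hb), ww_low ht]
    obtain ⟨hg0, hg1⟩ := ww_high hM hb
    have h1 : (-ww M b) * t ≥ 0 := mul_nonneg hg0 ht0
    nlinarith
  · rw [if_neg (not_le.2 hb)]
    obtain ⟨hb0', hb1'⟩ := ww_high hM hb
    obtain ⟨hg0, hg1⟩ := ww_high hM ht
    have h1 : (-ww M t) * b ≥ 0 := mul_nonneg hg0 hb0
    have h2 : (-ww M b) * t ≥ 0 := mul_nonneg hb0' ht0
    nlinarith

/-- Center dual contribution. -/
noncomputable def Cterm (M b c : ℝ) : ℝ := b + c - (ww M b + ww M c) * (b + c - 1)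

lemma Cterm_nonneg {M b c : ℝ} (hM : 1 ≤ M) (hb0 : 0 ≤ b) (hb1 : b ≤ 1)
    (hc0 : 0 ≤ c) (hc1 : c ≤ 1) : 0 ≤ Cterm M b c := by
  unfold Cterm
  rcases le_or_gt b (1/2) with hb | hb <;> rcases le_or_gt c (1/2) with hc | hc
  · rw [ww_low hb, ww_low hc]; linarith
  · rw [ww_low hb]
    obtain ⟨hg0, hg1⟩ := ww_high hM hc
    have h1 : (-ww M c) * b ≥ 0 := mul_nonneg hg0 hb0
    nlinarith
  · rw [ww_low hc]
    obtain ⟨hg0, hg1⟩ := ww_high hM hb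
    have h1 : (-ww M b) * c ≥ 0 := mul_nonneg hg0 hc0
    nlinarith
  · obtain ⟨hb0', hb1'⟩ := ww_high hM hb
    obtain ⟨hg0, hg1⟩ := ww_high hM hc
    have h1 : (-ww M b) * (b + c - 1) ≥ 0 := mul_nonneg hb0' (by linarith)
    have h2 : (-ww M c) * (b + c - 1) ≥ 0 := mul_nonneg hg0 (by linarith)
    nlinarith

lemma Cterm_ultra {M b c : ℝ} (hM : 1 ≤ M) (hb1 : b ≤ 1) (hc1 : c ≤ 1)
    (hb : M * (1 - b) ≤ 1/4) (hc : M * (1 - c) ≤ 1/4) : M ≤ Cterm M b c := by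
  unfold Cterm
  rw [ww_ultra hM hb1 hb, ww_ultra hM hc1 hc]
  nlinarith [(mul_nonneg (by linarith : (0:ℝ) ≤ M - 1) (by linarith : (0:ℝ) ≤ 1 - b))]

lemma center_row {k : ℕ} (i : Fin 2) (u : Fin 2 × Fin (k+1)) :
    doubleStarW k (i, 0) u = if u.1 = i ∨ u.2 = 0 then 1 else 0 := by
  obtain ⟨a, b⟩ := u
  unfold doubleStarW
  simp only [Prod.mk.injEq]
  split_ifs <;> simp_all <;> tauto

lemma leaf_row {k : ℕ} (i : Fin 2) (j : Fin (k+1)) (hj : j ≠ 0) (u : Fin 2 × Fin (k+1)) :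
    doubleStarW k (i, j) u = if u = (i, j) ∨ u = (i, 0) then 1 else 0 := by
  obtain ⟨a, b⟩ := u
  unfold doubleStarW
  simp only [Prod.mk.injEq]
  split_ifs <;> simp_all <;> tauto

lemma in_leaf {k : ℕ} (s : Fin 2 × Fin (k+1) → ℝ) (i : Fin 2) (j : Fin (k+1)) (hj : j ≠ 0) :
    ∑ u ∈ Finset.univ.erase (i, j), doubleStarW k (i, j) u * s u = s (i, 0) := by
  rw [Finset.sum_eq_single_of_mem (i, (0 : Fin (k+1)))]
  · rw [leaf_row i j hj, if_pos (Or.inr rfl), one_mul]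
  · exact Finset.mem_erase.2 ⟨by simp [Prod.ext_iff, (Ne.symm hj)], Finset.mem_univ _⟩
  · intro u hu hne
    rw [leaf_row i j hj, if_neg, zero_mul]
    rintro (h | h)
    · exact (Finset.mem_erase.1 hu).1 h
    · exact hne h

lemma sum_center_row {k : ℕ} (s : Fin 2 × Fin (k+1) → ℝ) (i : Fin 2) :
    ∑ u, doubleStarW k (i, 0) u * s u
      = (∑ b, s (i, b)) + s (i + 1, 0) := by
  simp only [center_row]
  rw [Fintype.sum_prod_type]
  have key : ∀ a : Fin 2, ∑ b : Fin (k+1), (if a = i ∨ b = 0 then (1:ℝ) else 0) * s (a, b)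
      = if a = i then ∑ b, s (a, b) else s (a, 0) := by
    intro a
    by_cases ha : a = i
    · rw [if_pos ha]
      refine Finset.sum_congr rfl fun b _ => ?_
      rw [if_pos (Or.inl ha), one_mul]
    · rw [if_neg ha]
      rw [Finset.sum_eq_single_of_mem (0 : Fin (k+1)) (Finset.mem_univ _)]
      · rw [if_pos (Or.inr rfl), one_mul]
      · intro b _ hb
        rw [if_neg (by tauto), zero_mul]
  simp only [key]
  fin_cases i <;> simp [Fin.sum_univ_two] <;> ring

lemma in_center {k : ℕ} (s : Fin 2 × Fin (k+1) → ℝ) (i : Fin 2) :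
    ∑ u ∈ Finset.univ.erase (i, 0), doubleStarW k (i, 0) u * s u
      = s (i + 1, 0) + ∑ j ∈ Finset.univ.erase 0, s (i, j) := by
  rw [Finset.sum_erase_eq_sub (Finset.mem_univ _), sum_center_row]
  have : doubleStarW k (i, 0) (i, 0) = 1 := by
    unfold doubleStarW; rw [if_pos rfl]
  rw [this, one_mul]
  have h2 : ∑ j : Fin (k+1), s (i, j) = s (i, 0) + ∑ j ∈ Finset.univ.erase 0, s (i, j) := by
    exact (Finset.add_sum_erase Finset.univ (fun j => s (i, j)) (Finset.mem_univ (0 : Fin (k+1)))).symm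
  rw [h2]; ring

/-- Incoming contribution. -/
noncomputable def InSum (k : ℕ) (s : Fin 2 × Fin (k+1) → ℝ) (v : Fin 2 × Fin (k+1)) : ℝ :=
  ∑ u ∈ Finset.univ.erase v, doubleStarW k v u * s u

lemma InSum_def (k : ℕ) (s : Fin 2 × Fin (k+1) → ℝ) (v : Fin 2 × Fin (k+1)) :
    (∑ u ∈ Finset.univ.erase v, doubleStarW k v u * s u) = InSum k s v := rfl

lemma pointwise {k : ℕ} (hk : 1 ≤ k) (s : Fin 2 × Fin (k+1) → ℝ)
    (hs0 : ∀ v, 0 ≤ s v) (hs1 : ∀ v, s v ≤ 1) :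
    Real.sqrt k / 16 ≤
      ∑ v, (s v - ww (Real.sqrt k) (s v) * (InSum k s v - (1 - s v))) := by
  simp only [← InSum_def]
  set M := Real.sqrt k with hMdef
  have hk1 : (1:ℝ) ≤ (k:ℝ) := by exact_mod_cast hk
  have hMsq : M * M = (k:ℝ) := Real.mul_self_sqrt (by linarith)
  have hM : 1 ≤ M := by nlinarith [Real.sqrt_nonneg (k:ℝ)]
  -- decompose the sum
  have decomp : ∑ v, (s v - ww M (s v) *
        ((∑ u ∈ Finset.univ.erase v, doubleStarW k v u * s u) - (1 - s v)))
      = Cterm M (s (0,0)) (s (1,0))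
        + ∑ j ∈ Finset.univ.erase 0, hterm M (s ((0:Fin 2), 0)) (s (0, j))
        + ∑ j ∈ Finset.univ.erase 0, hterm M (s ((1:Fin 2), 0)) (s (1, j)) := by
    rw [Fintype.sum_prod_type]
    have hstar : ∀ i : Fin 2,
        (∑ j : Fin (k+1), (s (i, j) - ww M (s (i, j)) *
          ((∑ u ∈ Finset.univ.erase (i, j), doubleStarW k (i, j) u * s u) - (1 - s (i, j)))))
        = (s (i,0) - ww M (s (i,0)) * (s (i+1,0) + s (i,0) - 1))
          + ∑ j ∈ Finset.univ.erase 0, hterm M (s (i, 0)) (s (i, j)) := by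
      intro i
      rw [← Finset.add_sum_erase _ _ (Finset.mem_univ (0 : Fin (k+1)))]
      rw [in_center s i]
      have hleaf : ∀ j ∈ Finset.univ.erase (0 : Fin (k+1)),
          (s (i, j) - ww M (s (i, j)) *
            ((∑ u ∈ Finset.univ.erase (i, j), doubleStarW k (i, j) u * s u) - (1 - s (i, j))))
          = hterm M (s (i,0)) (s (i,j)) + ww M (s (i,0)) * s (i,j) := by
        intro j hj
        rw [in_leaf s i j (Finset.ne_of_mem_erase hj)]
        unfold hterm; ring
      rw [Finset.sum_congr rfl hleaf, Finset.sum_add_distrib, ← Finset.mul_sum]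
      ring
    rw [Fin.sum_univ_two, hstar 0, hstar 1]
    unfold Cterm
    have e1 : (0:Fin 2)+1 = 1 := rfl
    have e2 : (1:Fin 2)+1 = 0 := rfl
    rw [e1, e2]
    ring
  rw [decomp]
  have hT : ∀ i : Fin 2, (k:ℝ) * lterm (s (i,0)) ≤
      ∑ j ∈ Finset.univ.erase 0, hterm M (s (i, 0)) (s (i, j)) := by
    intro i
    have hcard : (Finset.univ.erase (0 : Fin (k+1))).card = k := by
      rw [Finset.card_erase_of_mem (Finset.mem_univ _), Finset.card_univ, Fintype.card_fin]
      omega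
    calc (k:ℝ) * lterm (s (i,0)) = (Finset.univ.erase (0 : Fin (k+1))).card • lterm (s (i,0)) := by
          rw [hcard, nsmul_eq_mul]
      _ ≤ _ := Finset.card_nsmul_le_sum _ _ _
          (fun j _ => hterm_ge hM (hs0 _) (hs1 _) (hs0 _) (hs1 _))
  have hT0 := hT 0
  have hT1 := hT 1
  have hTnn : ∀ i : Fin 2, (0:ℝ) ≤ (k:ℝ) * lterm (s (i,0)) :=
    fun i => mul_nonneg (by positivity) (lterm_nonneg (hs1 _))
  have hCnn : 0 ≤ Cterm M (s (0,0)) (s (1,0)) :=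
    Cterm_nonneg hM (hs0 _) (hs1 _) (hs0 _) (hs1 _)
  by_cases hA : M * (1 - s ((0:Fin 2),0)) ≤ 1/4 ∧ M * (1 - s ((1:Fin 2),0)) ≤ 1/4
  · have hC := Cterm_ultra hM (hs1 _) (hs1 _) hA.1 hA.2
    have := hTnn 0
    have := hTnn 1
    nlinarith
  · have key : ∀ i : Fin 2, ¬ (M * (1 - s (i,0)) ≤ 1/4) → M / 16 ≤ (k:ℝ) * lterm (s (i,0)) := by
      intro i hi
      push_neg at hi
      unfold lterm
      split_ifs with hb
      · nlinarith
      · nlinarith [hs1 (i, (0:Fin (k+1))), hs0 (i, (0:Fin (k+1)))]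
    rcases not_and_or.1 hA with h | h
    · have := key 0 h
      have := hTnn 1
      nlinarith
    · have := key 1 h
      have := hTnn 0
      nlinarith

lemma dsW_nonneg {k : ℕ} (p q : Fin 2 × Fin (k+1)) : 0 ≤ doubleStarW k p q := by
  unfold doubleStarW; split_ifs <;> norm_num

lemma dsW_own_center {k : ℕ} (i : Fin 2) (j : Fin (k+1)) :
    doubleStarW k (i, j) (i, 0) = 1 := by
  unfold doubleStarW
  by_cases hj : j = 0
  · subst hj; rw [if_pos rfl]
  · rw [if_neg (by simp [Prod.ext_iff, hj]), if_neg (by simp [hj]), if_pos (by simp)]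

lemma opt_le (k : ℕ) : OPT (doubleStarW k) ≤ 2 := by
  unfold OPT
  apply csInf_le
  · refine ⟨0, ?_⟩
    rintro c ⟨θ, ⟨hθ0, _⟩, rfl⟩
    exact Finset.sum_nonneg fun v _ => hθ0 v
  · refine ⟨fun v => if v.2 = 0 then 1 else 0, ⟨fun v => by positivity, ?_⟩, ?_⟩
    · intro v
      have hsum : ∑ u, doubleStarW k v u * (if u.2 = 0 then (1:ℝ) else 0)
          = doubleStarW k v (0, 0) + doubleStarW k v (1, 0) := by
        rw [Fintype.sum_prod_type]
        have : ∀ a : Fin 2, ∑ b : Fin (k+1),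
            doubleStarW k v (a, b) * (if ((a, b) : Fin 2 × Fin (k+1)).2 = 0 then (1:ℝ) else 0)
            = doubleStarW k v (a, 0) := by
          intro a
          rw [Finset.sum_eq_single_of_mem (0 : Fin (k+1)) (Finset.mem_univ _)]
          · simp
          · intro b _ hb
            simp [hb]
        simp only [this]
        rw [Fin.sum_univ_two]
      rw [hsum]
      obtain ⟨i, j⟩ := v
      have hi : i = 0 ∨ i = 1 := by
        rcases i with ⟨v, hv⟩
        interval_cases v
        · exact Or.inl rfl
        · exact Or.inr rfl
      rcases hi with rfl | rfl
      · have := dsW_own_center (0 : Fin 2) j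
        have h2 := dsW_nonneg ((0 : Fin 2), j) ((1 : Fin 2), (0 : Fin (k+1)))
        simp only [this]
        linarith
      · have := dsW_own_center (1 : Fin 2) j
        have h2 := dsW_nonneg ((1 : Fin 2), j) ((0 : Fin 2), (0 : Fin (k+1)))
        simp only [this]
        linarith
    · rw [Fintype.sum_prod_type]
      have : ∀ a : Fin 2, ∑ b : Fin (k+1),
          (if ((a, b) : Fin 2 × Fin (k+1)).2 = 0 then (1:ℝ) else 0) = 1 := by
        intro a
        simp only []
        rw [Finset.sum_ite_eq' Finset.univ (0 : Fin (k+1)) (fun _ => (1:ℝ))]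
        simp
      simp only [this]
      rw [Fin.sum_univ_two]
      norm_num

lemma cost_ge {k : ℕ} (hk : 1 ≤ k) (D : Scheme (Fin 2 × Fin (k+1)))
    (hD : D.Persuasive (doubleStarW k)) : Real.sqrt k / 16 ≤ D.cost := by
  set M := Real.sqrt k with hMdef
  set T : ℝ := ∑ θ ∈ D.sig, ww M θ * D.slack (doubleStarW k) θ with hT
  have hTnn : 0 ≤ T := by
    refine Finset.sum_nonneg fun θ hθ => ?_
    rcases (D.sig_mem θ hθ).1.lt_or_eq with h | h
    · rw [hD.1 θ hθ h, mul_zero]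
    · rw [← h, ww_low (by norm_num)]
      have := hD.2 (h ▸ hθ)
      linarith
  -- rewrite T as an expectation
  have hTeq : T = ∑ s ∈ D.supp, D.p s * (∑ v, ww M (s v) * (InSum k s v - (1 - s v))) := by
    rw [hT]
    unfold Scheme.slack Scheme.Contrib Scheme.Num Scheme.exp
    simp only [InSum_def]
    have step1 : ∀ θ ∈ D.sig,
        ww M θ * ((∑ s ∈ D.supp, D.p s * ∑ v, if s v = θ then InSum k s v else 0)
          - (1 - θ) * ∑ s ∈ D.supp, D.p s * ∑ v, if s v = θ then (1:ℝ) else 0)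
        = ∑ s ∈ D.supp, D.p s *
            (∑ v, if s v = θ then ww M θ * (InSum k s v - (1 - θ)) else 0) := by
      intro θ _
      simp only [mul_sub, Finset.mul_sum, ← Finset.sum_sub_distrib]
      refine Finset.sum_congr rfl fun s _ => ?_
      refine Finset.sum_congr rfl fun v _ => ?_
      split_ifs <;> ring
    rw [Finset.sum_congr rfl step1, Finset.sum_comm]
    refine Finset.sum_congr rfl fun s hs => ?_
    rw [← Finset.mul_sum]
    congr 1
    rw [Finset.sum_comm]
    refine Finset.sum_congr rfl fun v _ => ?_
    rw [Finset.sum_ite_eq D.sig (s v) (fun θ => ww M θ * (InSum k s v - (1 - θ))),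
      if_pos (D.val_mem s hs v)]
  -- pointwise bound under the expectation
  have hpt : ∀ s ∈ D.supp, M / 16 + ∑ v, ww M (s v) * (InSum k s v - (1 - s v)) ≤ ∑ v, s v := by
    intro s hs
    have h0 : ∀ v, 0 ≤ s v := fun v => (D.sig_mem _ (D.val_mem s hs v)).1
    have h1 : ∀ v, s v ≤ 1 := fun v => (D.sig_mem _ (D.val_mem s hs v)).2
    have h2 := pointwise hk s h0 h1
    rw [Finset.sum_sub_distrib] at h2
    rw [← hMdef] at h2
    linarith
  have hcost : D.cost = ∑ s ∈ D.supp, D.p s * ∑ v, s v := rfl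
  have key : M / 16 + T ≤ D.cost := by
    rw [hcost, hTeq]
    calc M / 16 + ∑ s ∈ D.supp, D.p s * (∑ v, ww M (s v) * (InSum k s v - (1 - s v)))
        = ∑ s ∈ D.supp, D.p s * (M / 16 + ∑ v, ww M (s v) * (InSum k s v - (1 - s v))) := by
          rw [Finset.sum_congr rfl (fun s _ => mul_add (D.p s) (M/16) _),
            Finset.sum_add_distrib, ← Finset.sum_mul, D.p_sum]
          ring
      _ ≤ ∑ s ∈ D.supp, D.p s * ∑ v, s v :=
          Finset.sum_le_sum fun s hs => mul_le_mul_of_nonneg_left (hpt s hs) (D.p_nonneg s hs)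
  linarith

/-- There exist `c > 0` and `k₀` such that for every `k ≥ k₀`, on the
double-star graph with parameter `k` (with `n = 2k + 2` vertices) one has `OPT ≤ 2`,
while every persuasive identity-independent signaling scheme has cost at least `c·√n`. -/
theorem statement1 :
    ∃ (c : ℝ) (k₀ : ℕ), 0 < c ∧
      ∀ k : ℕ, k₀ ≤ k →
        OPT (doubleStarW k) ≤ 2 ∧
        ∀ D : Scheme (Fin 2 × Fin (k+1)), D.Persuasive (doubleStarW k) →
          c * Real.sqrt ((2 * k + 2 : ℕ) : ℝ) ≤ D.cost := by
  refine ⟨1/32, 1, by norm_num, fun k hk => ⟨opt_le k, fun D hD => ?_⟩⟩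
  have h1 := cost_ge hk D hD
  have hk1 : (1:ℝ) ≤ (k:ℝ) := by exact_mod_cast hk
  have h2 : Real.sqrt ((2 * k + 2 : ℕ) : ℝ) ≤ 2 * Real.sqrt k := by
    have h3 : ((2 * k + 2 : ℕ) : ℝ) ≤ 4 * (k:ℝ) := by push_cast; linarith
    calc Real.sqrt ((2 * k + 2 : ℕ) : ℝ) ≤ Real.sqrt (4 * (k:ℝ)) := Real.sqrt_le_sqrt h3
      _ = 2 * Real.sqrt k := by
          rw [show (4:ℝ) * (k:ℝ) = (2*Real.sqrt k) * (2*Real.sqrt k) by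
              have := Real.mul_self_sqrt (show (0:ℝ) ≤ k by linarith); nlinarith,
            Real.sqrt_mul_self (by positivity)]
  nlinarith [Real.sqrt_nonneg ((2 * k + 2 : ℕ) : ℝ)]
end

section
/- Let G be a unit-weight collaboration instance that admits an optimal stable solution θ* (a stable feasible θ minimizing ‖θ‖₁, so ‖θ*‖₁ = OPT^stable). Then there exists a persuasive binary identity-independent signaling scheme D with Cost(D) = OPT^stable. -/
open Finset

variable {V : Type*}

/-- A stable solution: feasible, and each vertex's contribution is the least
nonnegative amount meeting its own feasibility given the others' contributions. -/
def Stable [Fintype V] [DecidableEq V] (W : V → V → ℝ) (θ : V → ℝ) : Prop :=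
  Feasible W θ ∧
  ∀ v : V, IsLeast {x : ℝ | 0 ≤ x ∧ 1 ≤ x + ∑ u ∈ Finset.univ.erase v, W v u * θ u} (θ v)

section MuAux
set_option linter.unusedSectionVars false
variable [Fintype V] [DecidableEq V]

noncomputable def mu (θ : V → ℝ) (nb : V → Finset V) : ℕ → Finset V → Finset V → ℝ
  | 0, _, J => if J = ∅ then 1 else 0
  | n+1, P, J =>
      if P = ∅ then (if J = ∅ then 1 else 0)
      else ∑ w ∈ P, (θ w / ∑ u ∈ P, θ u) *
        ∑ J' ∈ (P.erase w).powerset,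
          (if insert w (J' \ nb w) = J then mu θ nb n (P.erase w) J' else 0)

lemma mu_nonneg (θ : V → ℝ) (nb : V → Finset V) (hθ : ∀ v, 0 ≤ θ v) :
    ∀ n P J, 0 ≤ mu θ nb n P J := by
  intro n
  induction n with
  | zero => intro P J; rw [mu]; positivity
  | succ n ih =>
    intro P J
    rw [mu]
    split
    · positivity
    · refine Finset.sum_nonneg fun w hw =>
        mul_nonneg (div_nonneg (hθ w) (Finset.sum_nonneg fun u _ => hθ u)) ?_
      refine Finset.sum_nonneg fun J' hJ' => ?_
      split
      · exact ih _ _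
      · exact le_refl 0

lemma mu_exp (θ : V → ℝ) (nb : V → Finset V) (n : ℕ) (P : Finset V) (hP : P ≠ ∅)
    (g : Finset V → ℝ) :
    ∑ J ∈ P.powerset, mu θ nb (n+1) P J * g J
      = ∑ w ∈ P, (θ w / ∑ u ∈ P, θ u) *
          ∑ J' ∈ (P.erase w).powerset,
            mu θ nb n (P.erase w) J' * g (insert w (J' \ nb w)) := by
  have h1 : ∑ J ∈ P.powerset, mu θ nb (n+1) P J * g J
      = ∑ J ∈ P.powerset, ∑ w ∈ P, (θ w / ∑ u ∈ P, θ u) *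
          ∑ J' ∈ (P.erase w).powerset,
            (if insert w (J' \ nb w) = J then mu θ nb n (P.erase w) J' else 0) * g J :=
    Finset.sum_congr rfl fun J _ => by
      rw [mu, if_neg hP, Finset.sum_mul]
      exact Finset.sum_congr rfl fun w _ => by rw [mul_assoc, Finset.sum_mul]
  rw [h1, Finset.sum_comm]
  refine Finset.sum_congr rfl fun w hw => ?_
  rw [← Finset.mul_sum]
  congr 1
  rw [Finset.sum_comm]
  refine Finset.sum_congr rfl fun J' hJ' => ?_
  have hmem : insert w (J' \ nb w) ∈ P.powerset := by
    rw [Finset.mem_powerset]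
    exact Finset.insert_subset hw
      ((Finset.sdiff_subset).trans ((Finset.mem_powerset.1 hJ').trans (Finset.erase_subset _ _)))
  have h2 : ∀ J ∈ P.powerset,
      (if insert w (J' \ nb w) = J then mu θ nb n (P.erase w) J' else 0) * g J
        = (if insert w (J' \ nb w) = J then mu θ nb n (P.erase w) J' * g J else 0) :=
    fun J _ => by split <;> simp
  rw [Finset.sum_congr rfl h2, Finset.sum_ite_eq P.powerset (insert w (J' \ nb w))
    (fun J => mu θ nb n (P.erase w) J' * g J), if_pos hmem]

lemma mu_empty (θ : V → ℝ) (nb : V → Finset V) (n : ℕ) :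
    ∑ J ∈ (∅ : Finset V).powerset, mu θ nb n ∅ J = 1 := by
  rw [Finset.powerset_empty, Finset.sum_singleton]
  cases n <;> simp [mu]

lemma mu_sum_one (θ : V → ℝ) (nb : V → Finset V) :
    ∀ n (P : Finset V), (∀ v ∈ P, 0 < θ v) → P.card ≤ n →
      ∑ J ∈ P.powerset, mu θ nb n P J = 1 := by
  intro n
  induction n with
  | zero =>
    intro P _ hc
    rw [Finset.card_eq_zero.1 (Nat.le_zero.1 hc)]
    exact mu_empty θ nb 0
  | succ n ih =>
    intro P hpos hc
    rcases eq_or_ne P ∅ with rfl | hP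
    · exact mu_empty θ nb (n+1)
    · have h := mu_exp θ nb n P hP (fun _ => 1)
      simp only [mul_one] at h
      rw [h]
      have hPsum : 0 < ∑ u ∈ P, θ u :=
        Finset.sum_pos hpos (Finset.nonempty_of_ne_empty hP)
      have : ∀ w ∈ P, (θ w / ∑ u ∈ P, θ u) *
          (∑ J' ∈ (P.erase w).powerset, mu θ nb n (P.erase w) J') = θ w / ∑ u ∈ P, θ u := by
        intro w hw
        rw [ih (P.erase w) (fun v hv => hpos v (Finset.mem_of_mem_erase hv))
          (by rw [Finset.card_erase_of_mem hw]; omega), mul_one]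
      rw [Finset.sum_congr rfl this, ← Finset.sum_div, div_self hPsum.ne']

lemma mu_indep (θ : V → ℝ) (nb : V → Finset V) (hsym : ∀ u v : V, u ∈ nb v → v ∈ nb u) :
    ∀ n (P J : Finset V), mu θ nb n P J ≠ 0 →
      J ⊆ P ∧ ∀ v ∈ J, ∀ u ∈ J, u ≠ v → u ∉ nb v := by
  intro n
  induction n with
  | zero =>
    intro P J h
    rw [mu] at h
    have : J = ∅ := by by_contra hne; rw [if_neg hne] at h; exact h rfl
    subst this
    exact ⟨Finset.empty_subset _, by simp⟩
  | succ n ih =>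
    intro P J h
    rw [mu] at h
    split at h
    · have : J = ∅ := by by_contra hne; rw [if_neg hne] at h; exact h rfl
      subst this
      exact ⟨Finset.empty_subset _, by simp⟩
    · obtain ⟨w, hw, hw2⟩ := Finset.exists_ne_zero_of_sum_ne_zero h
      have hinner : (∑ J' ∈ (P.erase w).powerset,
          if insert w (J' \ nb w) = J then mu θ nb n (P.erase w) J' else 0) ≠ 0 :=
        fun h0 => hw2 (by rw [h0, mul_zero])
      obtain ⟨J', hJ', hJ'2⟩ := Finset.exists_ne_zero_of_sum_ne_zero hinner
      have hcond : insert w (J' \ nb w) = J := by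
        by_contra hc; rw [if_neg hc] at hJ'2; exact hJ'2 rfl
      rw [if_pos hcond] at hJ'2
      obtain ⟨hsub, hind⟩ := ih (P.erase w) J' hJ'2
      subst hcond
      constructor
      · exact Finset.insert_subset hw
          ((Finset.sdiff_subset).trans (hsub.trans (Finset.erase_subset _ _)))
      · intro v hv u hu hne
        rcases Finset.mem_insert.1 hv with rfl | hv'
        · rcases Finset.mem_insert.1 hu with rfl | hu'
          · exact absurd rfl hne
          · exact (Finset.mem_sdiff.1 hu').2
        · rcases Finset.mem_insert.1 hu with rfl | hu'
          · exact fun hc => (Finset.mem_sdiff.1 hv').2 (hsym u v hc)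
          · exact hind v (Finset.mem_sdiff.1 hv').1 u (Finset.mem_sdiff.1 hu').1 hne

lemma mu_marginal (θ : V → ℝ) (nb : V → Finset V)
    (hsym : ∀ u v : V, u ∈ nb v ↔ v ∈ nb u) (hvv : ∀ v : V, v ∉ nb v) :
    ∀ n (P : Finset V), (∀ v ∈ P, 0 < θ v) → P.card ≤ n → ∀ v ∈ P,
      ∑ J ∈ P.powerset, mu θ nb n P J * (if v ∈ J then (1:ℝ) else 0)
        = θ v / (θ v + ∑ u ∈ nb v ∩ P, θ u) := by
  intro n
  induction n with
  | zero =>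
    intro P _ hc v hv
    rw [Finset.card_eq_zero.1 (Nat.le_zero.1 hc)] at hv
    exact absurd hv (Finset.notMem_empty v)
  | succ n ih =>
    intro P hpos hc v hv
    have hP : P ≠ ∅ := Finset.ne_empty_of_mem hv
    rw [mu_exp θ nb n P hP]
    set ΘP := ∑ u ∈ P, θ u with hΘP
    set Dv := θ v + ∑ u ∈ nb v ∩ P, θ u with hDv
    have hPsum : 0 < ΘP := Finset.sum_pos hpos (Finset.nonempty_of_ne_empty hP)
    have hDpos : 0 < Dv := by
      have : 0 ≤ ∑ u ∈ nb v ∩ P, θ u :=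
        Finset.sum_nonneg fun u hu => (hpos u (Finset.mem_of_mem_inter_right hu)).le
      have := hpos v hv
      linarith
    have hcard : ∀ w ∈ P, (P.erase w).card ≤ n := fun w hw => by
      rw [Finset.card_erase_of_mem hw]; omega
    have hpos' : ∀ w : V, ∀ u ∈ P.erase w, 0 < θ u :=
      fun w u hu => hpos u (Finset.mem_of_mem_erase hu)
    have hA : ∀ w ∈ P, (∑ J' ∈ (P.erase w).powerset, mu θ nb n (P.erase w) J' *
          (if v ∈ insert w (J' \ nb w) then (1:ℝ) else 0))
        = if w = v then 1 else (if w ∈ nb v then 0 else θ v / Dv) := by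
      intro w hw
      rcases eq_or_ne w v with hwv | hwv
      · subst hwv
        rw [if_pos rfl]
        have : ∀ J' ∈ (P.erase w).powerset,
            mu θ nb n (P.erase w) J' * (if w ∈ insert w (J' \ nb w) then (1:ℝ) else 0)
              = mu θ nb n (P.erase w) J' := fun J' _ => by
          rw [if_pos (Finset.mem_insert_self w _), mul_one]
        rw [Finset.sum_congr rfl this, mu_sum_one θ nb n (P.erase w) (hpos' w) (hcard w hw)]
      · rw [if_neg hwv]
        rcases Finset.decidableMem w (nb v) with hnb | hnb
        swap
        · rw [if_pos hnb]
          have hvnbw : v ∈ nb w := (hsym w v).1 hnb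
          have : ∀ J' ∈ (P.erase w).powerset,
              mu θ nb n (P.erase w) J' * (if v ∈ insert w (J' \ nb w) then (1:ℝ) else 0)
                = 0 := by
            intro J' _
            rw [if_neg, mul_zero]
            intro hmem
            rcases Finset.mem_insert.1 hmem with h | h
            · exact hwv h.symm
            · exact (Finset.mem_sdiff.1 h).2 hvnbw
          rw [Finset.sum_congr rfl this, Finset.sum_const_zero]
        · rw [if_neg hnb]
          have hvnbw : v ∉ nb w := fun hc => hnb ((hsym v w).1 hc)
          have heq : ∀ J' ∈ (P.erase w).powerset,
              mu θ nb n (P.erase w) J' * (if v ∈ insert w (J' \ nb w) then (1:ℝ) else 0)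
                = mu θ nb n (P.erase w) J' * (if v ∈ J' then (1:ℝ) else 0) := by
            intro J' _
            congr 1
            have : v ∈ insert w (J' \ nb w) ↔ v ∈ J' := by
              rw [Finset.mem_insert, Finset.mem_sdiff]
              constructor
              · rintro (h | h)
                · exact absurd h.symm hwv
                · exact h.1
              · exact fun h => Or.inr ⟨h, hvnbw⟩
            simp only [this]
          have hvP : v ∈ P.erase w := Finset.mem_erase.2 ⟨fun h => hwv h.symm, hv⟩
          have hseteq : nb v ∩ P.erase w = nb v ∩ P := by
            ext u
            simp only [Finset.mem_inter, Finset.mem_erase]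
            constructor
            · rintro ⟨h1, _, h2⟩; exact ⟨h1, h2⟩
            · rintro ⟨h1, h2⟩
              exact ⟨h1, fun hc => hnb (by rwa [hc] at h1), h2⟩
          rw [Finset.sum_congr rfl heq,
            ih (P.erase w) (hpos' w) (hcard w hw) v hvP, hseteq]
    rw [Finset.sum_congr rfl fun w hw => by rw [hA w hw]]
    rw [← Finset.add_sum_erase P _ hv, if_pos rfl, mul_one]
    have hsplit : ∀ w ∈ P.erase v, (θ w / ΘP) * (if w = v then (1:ℝ) else if w ∈ nb v then 0 else θ v / Dv)
        = if w ∈ nb v then 0 else (θ w / ΘP) * (θ v / Dv) := by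
      intro w hw
      rw [if_neg (Finset.mem_erase.1 hw).1]
      split <;> simp
    rw [Finset.sum_congr rfl hsplit, Finset.sum_ite, Finset.sum_const_zero, zero_add]
    have hson : ((P.erase v).filter (fun w => w ∉ nb v)) = P \ insert v (nb v ∩ P) := by
      ext u
      simp only [Finset.mem_filter, Finset.mem_erase, Finset.mem_sdiff, Finset.mem_insert,
        Finset.mem_inter, not_or]
      constructor
      · rintro ⟨⟨h1, h2⟩, h3⟩; exact ⟨h2, h1, fun hc => h3 hc.1⟩
      · rintro ⟨h1, h2, h3⟩; exact ⟨⟨h2, h1⟩, fun hc => h3 ⟨hc, h1⟩⟩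
    rw [hson, ← Finset.sum_mul, ← Finset.sum_div]
    have hsub : insert v (nb v ∩ P) ⊆ P :=
      Finset.insert_subset hv (Finset.inter_subset_right)
    have hsdiff : ∑ w ∈ P \ insert v (nb v ∩ P), θ w = ΘP - Dv := by
      rw [Finset.sum_sdiff_eq_sub hsub, hDv]
      congr 1
      rw [Finset.sum_insert (fun hc => hvv v (Finset.mem_inter.1 hc).1)]
    rw [hsdiff]
    field_simp
    ring

end MuAux

/-- If a unit-weight collaboration instance admits an optimal stable
solution `θ*` (a stable solution minimizing the total workload, so `‖θ*‖₁ = OPT^stable`),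
then there is a persuasive binary identity-independent signaling scheme whose cost equals
`OPT^stable`. -/
theorem statement6 (V : Type*) [Fintype V] [DecidableEq V] (W : V → V → ℝ)
    (hW : IsCollab W) (hU : UnitWeight W)
    (θs : V → ℝ) (hθs : Stable W θs)
    (hopt : ∀ θ : V → ℝ, Stable W θ → ∑ v, θs v ≤ ∑ v, θ v) :
    ∃ D : Scheme V, D.sig.card ≤ 2 ∧ D.Persuasive W ∧ D.cost = ∑ v, θs v := by
  classical
  obtain ⟨⟨hθ0, hfeas⟩, hst⟩ := hθs
  set nb : V → Finset V := fun v => univ.filter (fun u => u ≠ v ∧ W v u = 1) with hnbdef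
  have hnbmem : ∀ u v : V, u ∈ nb v ↔ u ≠ v ∧ W v u = 1 := by
    intro u v; simp [hnbdef]
  have hsym : ∀ u v : V, u ∈ nb v ↔ v ∈ nb u := by
    intro u v
    rw [hnbmem, hnbmem, hW.1 v u]
    exact ⟨fun ⟨h1, h2⟩ => ⟨h1.symm, h2⟩, fun ⟨h1, h2⟩ => ⟨h1.symm, h2⟩⟩
  have hvv : ∀ v : V, v ∉ nb v := fun v hc => ((hnbmem v v).1 hc).1 rfl
  set P0 : Finset V := univ.filter (fun v => 0 < θs v) with hP0def
  have hposP0 : ∀ v ∈ P0, 0 < θs v := fun v hv => (Finset.mem_filter.1 hv).2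
  have hzero : ∀ v, v ∉ P0 → θs v = 0 := by
    intro v hv
    refine le_antisymm (not_lt.1 ?_) (hθ0 v)
    intro hc
    exact hv (Finset.mem_filter.2 ⟨Finset.mem_univ v, hc⟩)
  have hfeas' : ∀ v, 1 ≤ θs v + ∑ u ∈ univ.erase v, W v u * θs u := by
    intro v
    have h := hfeas v
    rwa [← Finset.add_sum_erase univ (fun u => W v u * θs u) (Finset.mem_univ v),
      hW.2.2 v, one_mul] at h
  have hSsum : ∀ v, ∑ u ∈ nb v ∩ P0, θs u = ∑ u ∈ univ.erase v, W v u * θs u := by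
    intro v
    have hsub : nb v ∩ P0 ⊆ univ.erase v := by
      intro u hu
      exact Finset.mem_erase.2 ⟨((hnbmem u v).1 (Finset.mem_inter.1 hu).1).1, Finset.mem_univ u⟩
    have h1 : ∑ u ∈ nb v ∩ P0, θs u = ∑ u ∈ nb v ∩ P0, W v u * θs u := by
      refine Finset.sum_congr rfl fun u hu => ?_
      rw [((hnbmem u v).1 (Finset.mem_inter.1 hu).1).2, one_mul]
    rw [h1]
    refine Finset.sum_subset hsub fun u hu hnu => ?_
    rcases Finset.decidableMem u P0 with hP | hP
    · rw [hzero u hP, mul_zero]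
    · have hune : u ≠ v := (Finset.mem_erase.1 hu).1
      have : u ∉ nb v := fun hc => hnu (Finset.mem_inter.2 ⟨hc, hP⟩)
      rcases hU v u (fun hc => hune hc.symm) with h | h
      · rw [h, zero_mul]
      · exact absurd ((hnbmem u v).2 ⟨hune, h⟩) this
  have hkey : ∀ v ∈ P0, θs v + ∑ u ∈ nb v ∩ P0, θs u = 1 := by
    intro v hv
    set Sv := ∑ u ∈ univ.erase v, W v u * θs u with hSv
    have hSnn : 0 ≤ Sv :=
      Finset.sum_nonneg fun u _ => mul_nonneg (hW.2.1 v u).1 (hθ0 u)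
    obtain ⟨⟨_, hmem⟩, hlb⟩ := hst v
    have hmax : θs v ≤ max (1 - Sv) 0 := hlb ⟨le_max_right _ _, by
      have := le_max_left (1 - Sv) 0
      linarith⟩
    have hvpos := hposP0 v hv
    have h1 : θs v ≤ 1 - Sv := by
      rcases max_cases (1 - Sv) 0 with ⟨he, _⟩ | ⟨he, _⟩
      · rwa [he] at hmax
      · rw [he] at hmax; linarith
    rw [hSsum v]
    linarith
  -- the distribution
  set q : Finset V → ℝ := mu θs nb P0.card P0 with hqdef
  have hq1 : ∑ J ∈ P0.powerset, q J = 1 := mu_sum_one θs nb P0.card P0 hposP0 le_rfl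
  have hqnn : ∀ J, 0 ≤ q J := fun J => mu_nonneg θs nb hθ0 P0.card P0 J
  have hqind : ∀ J, q J ≠ 0 → J ⊆ P0 ∧ ∀ v ∈ J, ∀ u ∈ J, u ≠ v → u ∉ nb v :=
    fun J h => mu_indep θs nb (fun u v hc => (hsym u v).1 hc) P0.card P0 J h
  have hM : ∀ v, ∑ J ∈ P0.powerset, q J * (if v ∈ J then (1:ℝ) else 0) = θs v := by
    intro v
    rcases Finset.decidableMem v P0 with hv | hv
    swap
    · rw [mu_marginal θs nb hsym hvv P0.card P0 hposP0 le_rfl v hv, hkey v hv, div_one]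
    · rw [hzero v hv]
      refine Finset.sum_eq_zero fun J hJ => ?_
      rw [if_neg, mul_zero]
      exact fun hc => hv (Finset.mem_powerset.1 hJ hc)
  set ind : Finset V → (V → ℝ) := fun J v => if v ∈ J then (1:ℝ) else 0 with hinddef
  have hindinj : ∀ J ∈ P0.powerset, ∀ J' ∈ P0.powerset, ind J = ind J' → J = J' := by
    intro J _ J' _ h
    ext v
    have := congrFun h v
    simp only [hinddef] at this
    constructor
    · intro hv
      by_contra hv'
      rw [if_pos hv, if_neg hv'] at this
      exact one_ne_zero this
    · intro hv
      by_contra hv'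
      rw [if_neg hv', if_pos hv] at this
      exact one_ne_zero this.symm
  have hfilter : ∀ J : Finset V, (univ.filter fun v => ind J v = 1) = J := by
    intro J
    ext v
    simp only [Finset.mem_filter, Finset.mem_univ, true_and, hinddef]
    constructor
    · intro h
      by_contra hv
      rw [if_neg hv] at h
      exact one_ne_zero h.symm
    · intro h
      rw [if_pos h]
  have hbridge : ∀ f : (V → ℝ) → ℝ,
      ∑ s ∈ P0.powerset.image ind, q (univ.filter fun v => s v = 1) * f s
        = ∑ J ∈ P0.powerset, q J * f (ind J) := by
    intro f
    rw [Finset.sum_image hindinj]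
    exact Finset.sum_congr rfl fun J _ => by rw [hfilter J]
  have hinner0 : ∀ J : Finset V, q J ≠ 0 → ∀ v ∈ J,
      ∑ u ∈ univ.erase v, W v u * ind J u = 0 := by
    intro J hq v hv
    obtain ⟨hsub, hind⟩ := hqind J hq
    refine Finset.sum_eq_zero fun u hu => ?_
    have hune : u ≠ v := (Finset.mem_erase.1 hu).1
    rcases Finset.decidableMem u J with hun | hun
    · rw [show ind J u = 0 from by simp only [hinddef]; rw [if_neg hun], mul_zero]
    · have hnnb : u ∉ nb v := hind v hv u hun hune
      rcases hU v u (fun hc => hune hc.symm) with h | h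
      · rw [h, zero_mul]
      · exact absurd ((hnbmem u v).2 ⟨hune, h⟩) hnnb
  have hMind : ∀ u, ∑ J ∈ P0.powerset, q J * ind J u = θs u := fun u => hM u
  have hNumInd : ∑ J ∈ P0.powerset, q J * (∑ v : V, ind J v) = ∑ v, θs v := by
    have : ∀ J ∈ P0.powerset, q J * (∑ v : V, ind J v) = ∑ v : V, q J * ind J v :=
      fun J _ => Finset.mul_sum _ _ _
    rw [Finset.sum_congr rfl this, Finset.sum_comm]
    exact Finset.sum_congr rfl fun v _ => hMind v
  have hContribAll : ∑ J ∈ P0.powerset,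
        q J * (∑ v : V, ∑ u ∈ univ.erase v, W v u * ind J u)
      = ∑ v : V, ∑ u ∈ univ.erase v, W v u * θs u := by
    have h1 : ∀ J ∈ P0.powerset, q J * (∑ v : V, ∑ u ∈ univ.erase v, W v u * ind J u)
        = ∑ v : V, ∑ u ∈ univ.erase v, W v u * ind J u * q J := by
      intro J _
      rw [Finset.mul_sum]
      refine Finset.sum_congr rfl fun v _ => ?_
      rw [Finset.mul_sum]
      exact Finset.sum_congr rfl fun u _ => by ring
    rw [Finset.sum_congr rfl h1, Finset.sum_comm]
    refine Finset.sum_congr rfl fun v _ => ?_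
    rw [Finset.sum_comm]
    refine Finset.sum_congr rfl fun u _ => ?_
    have : ∀ J ∈ P0.powerset, W v u * ind J u * q J = W v u * (q J * ind J u) :=
      fun J _ => by ring
    rw [Finset.sum_congr rfl this, ← Finset.mul_sum, hMind u]
  -- the scheme
  refine ⟨⟨{0, 1}, ?_, P0.powerset.image ind, ?_,
    fun s => q (univ.filter fun v => s v = 1), ?_, ?_⟩, ?_, ?_, ?_⟩
  · intro t ht
    rcases Finset.mem_insert.1 ht with rfl | ht
    · norm_num
    · rw [Finset.mem_singleton.1 ht]; norm_num
  · intro s hs v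
    obtain ⟨J, _, rfl⟩ := Finset.mem_image.1 hs
    simp only [hinddef]
    split
    · exact Finset.mem_insert.2 (Or.inr (Finset.mem_singleton.2 rfl))
    · exact Finset.mem_insert_self 0 _
  · exact fun s _ => hqnn _
  · rw [Finset.sum_image hindinj]
    rw [Finset.sum_congr rfl fun J _ => by rw [hfilter J]]
    exact hq1
  · -- card
    refine (Finset.card_insert_le _ _).trans ?_
    rw [Finset.card_singleton]
  · -- persuasive
    constructor
    · intro t ht htpos
      have ht1 : t = 1 := by
        rcases Finset.mem_insert.1 ht with rfl | ht
        · exact absurd htpos (lt_irrefl 0)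
        · exact Finset.mem_singleton.1 ht
      subst ht1
      show (∑ s ∈ P0.powerset.image ind, q (univ.filter fun v => s v = 1) *
          (∑ v : V, if s v = 1 then ∑ u ∈ univ.erase v, W v u * s u else 0))
        - (1 - 1) * ((∑ s ∈ P0.powerset.image ind, q (univ.filter fun v => s v = 1) *
          (∑ v : V, if s v = 1 then (1:ℝ) else 0))) = 0
      rw [hbridge, hbridge]
      rw [show (1:ℝ) - 1 = 0 from by ring, zero_mul, sub_zero]
      refine Finset.sum_eq_zero fun J _ => ?_
      rcases eq_or_ne (q J) 0 with hqJ | hqJ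
      · rw [hqJ, zero_mul]
      · rw [show (∑ v : V, if ind J v = 1 then ∑ u ∈ univ.erase v, W v u * ind J u else 0) = 0
          from ?_, mul_zero]
        refine Finset.sum_eq_zero fun v _ => ?_
        rcases Finset.decidableMem v J with hvJ | hvJ
        · rw [if_neg]
          simp only [hinddef]
          rw [if_neg hvJ]
          exact zero_ne_one
        · rw [if_pos (by simp only [hinddef]; rw [if_pos hvJ]), hinner0 J hqJ v hvJ]
    · intro _
      show (0:ℝ) ≤ (∑ s ∈ P0.powerset.image ind, q (univ.filter fun v => s v = 1) *
          (∑ v : V, if s v = 0 then ∑ u ∈ univ.erase v, W v u * s u else 0))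
        - (1 - 0) * ((∑ s ∈ P0.powerset.image ind, q (univ.filter fun v => s v = 1) *
          (∑ v : V, if s v = 0 then (1:ℝ) else 0)))
      rw [hbridge, hbridge]
      have hC : ∑ J ∈ P0.powerset, q J *
            (∑ v : V, if ind J v = 0 then ∑ u ∈ univ.erase v, W v u * ind J u else 0)
          = ∑ v : V, ∑ u ∈ univ.erase v, W v u * θs u := by
        rw [← hContribAll]
        refine Finset.sum_congr rfl fun J _ => ?_
        rcases eq_or_ne (q J) 0 with hqJ | hqJ
        · rw [hqJ, zero_mul, zero_mul]
        · congr 1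
          refine Finset.sum_congr rfl fun v _ => ?_
          rcases Finset.decidableMem v J with hvJ | hvJ
          · rw [if_pos (by simp only [hinddef]; rw [if_neg hvJ])]
          · rw [if_neg (by simp only [hinddef]; rw [if_pos hvJ]; exact one_ne_zero),
              hinner0 J hqJ v hvJ]
      have hN : ∑ J ∈ P0.powerset, q J * (∑ v : V, if ind J v = 0 then (1:ℝ) else 0)
          = (∑ _v : V, (1:ℝ)) - ∑ v, θs v := by
        have h2 : ∀ J ∈ P0.powerset, q J * (∑ v : V, if ind J v = 0 then (1:ℝ) else 0)
            = q J * (∑ _v : V, (1:ℝ)) - q J * (∑ v : V, ind J v) := by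
          intro J _
          rw [← mul_sub]
          congr 1
          rw [← Finset.sum_sub_distrib]
          refine Finset.sum_congr rfl fun v _ => ?_
          rcases Finset.decidableMem v J with hvJ | hvJ
          · rw [if_pos (by simp only [hinddef]; rw [if_neg hvJ])]
            simp only [hinddef]
            rw [if_neg hvJ, sub_zero]
          · rw [if_neg (by simp only [hinddef]; rw [if_pos hvJ]; exact one_ne_zero)]
            simp only [hinddef]
            rw [if_pos hvJ, sub_self]
        rw [Finset.sum_congr rfl h2, Finset.sum_sub_distrib, ← Finset.sum_mul, hq1,
          one_mul, hNumInd]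
      rw [hC, hN, show (1:ℝ) - 0 = 1 from by ring, one_mul]
      have hrw : (∑ v : V, ∑ u ∈ univ.erase v, W v u * θs u)
            - ((∑ _v : V, (1:ℝ)) - ∑ v, θs v)
          = ∑ v : V, (θs v + (∑ u ∈ univ.erase v, W v u * θs u) - 1) := by
        rw [Finset.sum_sub_distrib, Finset.sum_add_distrib]
        ring
      rw [hrw]
      refine Finset.sum_nonneg fun v _ => ?_
      have := hfeas' v
      linarith
  · -- cost
    show ∑ s ∈ P0.powerset.image ind, q (univ.filter fun v => s v = 1) * (∑ v : V, s v)
        = ∑ v, θs v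
    rw [hbridge]
    exact hNumInd
end

section
/- Let D be a probability distribution over subsets S ⊆ V with E_{S~D}[|S|] > 0, and suppose E_{S~D}[Cut(S, V∖S)] · E_{S~D}[|S|] ≥ E_{S~D}[Induced(S)] · E_{S~D}[|V∖S|]. Set α = E_{S~D}[|S|] / E_{S~D}[Induced(S)] (which lies in (0,1]). Then the identity-independent signaling scheme with signal space {0, α} that draws S ~ D and assigns s_v = α·1[v ∈ S] is persuasive (i.e., Δ_α = 0 and Δ_0 ≥ 0), and its cost equals (E_{S~D}[|S|])² / E_{S~D}[Induced(S)], which is at most E_{S~D}[|S|]. -/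
open Finset

variable {V : Type*}

/-- Total weight of the cut between `S` and its complement. -/
noncomputable def cutW [Fintype V] [DecidableEq V] (W : V → V → ℝ) (S : Finset V) : ℝ :=
  ∑ u ∈ S, ∑ v ∈ Sᶜ, W u v

/-- Total weight of the subgraph induced by `S` (including the unit diagonal). -/
noncomputable def inducedW (W : V → V → ℝ) (S : Finset V) : ℝ :=
  ∑ u ∈ S, ∑ v ∈ S, W u v

/-- Given a distribution over subsets `S ⊆ V` with
`E[|S|] > 0` and `E[Cut(S, V∖S)]·E[|S|] ≥ E[Induced(S)]·E[|V∖S|]`, the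
binary scheme with signal space `{0, α}` for `α = E[|S|]/E[Induced(S)]` that draws
`S ~ D` and assigns `s_v = α·1[v ∈ S]` satisfies `α ∈ (0,1]`, is persuasive, and has cost
`(E[|S|])² / E[Induced(S)] ≤ E[|S|]`. -/
theorem statement10 (V : Type*) [Fintype V] [DecidableEq V] (W : V → V → ℝ)
    (hW : IsCollab W)
    (dsupp : Finset (Finset V)) (dp : Finset V → ℝ)
    (hdp : ∀ S ∈ dsupp, 0 ≤ dp S) (hsum : ∑ S ∈ dsupp, dp S = 1)
    (hES : 0 < ∑ S ∈ dsupp, dp S * (S.card : ℝ))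
    (hineq : (∑ S ∈ dsupp, dp S * inducedW W S) *
        (∑ S ∈ dsupp, dp S * ((Fintype.card V : ℝ) - (S.card : ℝ))) ≤
      (∑ S ∈ dsupp, dp S * cutW W S) * (∑ S ∈ dsupp, dp S * (S.card : ℝ)))
    (α : ℝ)
    (hα : α = (∑ S ∈ dsupp, dp S * (S.card : ℝ)) / (∑ S ∈ dsupp, dp S * inducedW W S)) :
    0 < α ∧ α ≤ 1 ∧
    ∃ D : Scheme V, D.sig = insert 0 {α} ∧
      (∀ f : (V → ℝ) → ℝ,
        D.exp f = ∑ S ∈ dsupp, dp S * f (fun v => if v ∈ S then α else 0)) ∧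
      D.Persuasive W ∧
      D.cost = (∑ S ∈ dsupp, dp S * (S.card : ℝ)) ^ 2 / (∑ S ∈ dsupp, dp S * inducedW W S) ∧
      D.cost ≤ ∑ S ∈ dsupp, dp S * (S.card : ℝ) := by

  classical
  obtain ⟨hsym, hbd, hdiag⟩ := hW
  set A := ∑ S ∈ dsupp, dp S * (S.card : ℝ) with hA
  set I := ∑ S ∈ dsupp, dp S * inducedW W S with hI
  set C := ∑ S ∈ dsupp, dp S * cutW W S with hC
  have hcard_le : ∀ S : Finset V, (S.card : ℝ) ≤ inducedW W S := by
    intro S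
    have h1 : ∀ u ∈ S, (1:ℝ) ≤ ∑ v ∈ S, W u v := by
      intro u hu
      have h2 := Finset.single_le_sum (f := fun v => W u v) (fun v _ => (hbd u v).1) hu
      simp only [hdiag] at h2
      exact h2
    calc (S.card : ℝ) = ∑ u ∈ S, (1:ℝ) := by simp
      _ ≤ ∑ u ∈ S, ∑ v ∈ S, W u v := Finset.sum_le_sum h1
      _ = inducedW W S := rfl
  have hAI : A ≤ I :=
    Finset.sum_le_sum fun S hS => mul_le_mul_of_nonneg_left (hcard_le S) (hdp S hS)
  have hIpos : 0 < I := lt_of_lt_of_le hES hAI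
  have hαpos : 0 < α := by rw [hα]; exact div_pos hES hIpos
  have hα1 : α ≤ 1 := by rw [hα]; exact (div_le_one hIpos).mpr hAI
  refine ⟨hαpos, hα1, ?_⟩
  set ind : Finset V → (V → ℝ) := fun S v => if v ∈ S then α else 0 with hind
  -- pointwise facts
  have hnumα : ∀ S : Finset V, (∑ v : V, if ind S v = α then (1:ℝ) else 0) = S.card := by
    intro S
    have h1 : ∀ v : V, (if ind S v = α then (1:ℝ) else 0) = if v ∈ S then 1 else 0 := by
      intro v; by_cases h : v ∈ S <;> simp [hind, h, hαpos.ne]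
    simp [h1, Finset.sum_ite_mem]
  have hnum0 : ∀ S : Finset V,
      (∑ v : V, if ind S v = 0 then (1:ℝ) else 0) = (Fintype.card V : ℝ) - S.card := by
    intro S
    have h1 : ∀ v : V, (if ind S v = 0 then (1:ℝ) else 0) = if v ∈ Sᶜ then 1 else 0 := by
      intro v; by_cases h : v ∈ S <;> simp [hind, h, hαpos.ne']
    simp only [h1, Finset.sum_ite_mem, Finset.univ_inter, Finset.sum_const, nsmul_eq_mul,
      mul_one]
    rw [Finset.card_compl, Nat.cast_sub (Finset.card_le_univ S)]
  have hinner : ∀ (S : Finset V) (v : V),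
      (∑ u ∈ Finset.univ.erase v, W v u * ind S u) = α * ∑ u ∈ S.erase v, W v u := by
    intro S v
    have hfe : (Finset.univ.erase v).filter (fun u => u ∈ S) = S.erase v := by
      ext u; simp [Finset.mem_erase, and_comm]
    calc (∑ u ∈ Finset.univ.erase v, W v u * ind S u)
        = ∑ u ∈ Finset.univ.erase v, (if u ∈ S then W v u * α else 0) := by
          refine Finset.sum_congr rfl fun u _ => ?_
          by_cases h : u ∈ S <;> simp [hind, h]
      _ = ∑ u ∈ (Finset.univ.erase v).filter (fun u => u ∈ S), W v u * α :=
          (Finset.sum_filter _ _).symm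
      _ = α * ∑ u ∈ S.erase v, W v u := by rw [hfe, ← Finset.sum_mul, mul_comm]
  have hconα : ∀ S : Finset V,
      (∑ v : V, if ind S v = α then ∑ u ∈ Finset.univ.erase v, W v u * ind S u else 0)
        = α * (inducedW W S - S.card) := by
    intro S
    have h1 : ∀ v : V,
        (if ind S v = α then ∑ u ∈ Finset.univ.erase v, W v u * ind S u else 0)
          = if v ∈ S then α * ∑ u ∈ S.erase v, W v u else 0 := by
      intro v; by_cases h : v ∈ S
      · have hv : ind S v = α := by simp [hind, h]
        rw [if_pos hv, if_pos h, hinner S v]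
      · have h0 : ind S v = 0 := by simp [hind, h]
        rw [if_neg (by rw [h0]; exact hαpos.ne), if_neg h]
    simp only [h1, Finset.sum_ite_mem, Finset.univ_inter]
    rw [← Finset.mul_sum]
    congr 1
    have h2 : ∀ v ∈ S, (∑ u ∈ S.erase v, W v u) = (∑ u ∈ S, W v u) - 1 := by
      intro v hv; rw [Finset.sum_erase_eq_sub hv, hdiag]
    rw [Finset.sum_congr rfl h2, Finset.sum_sub_distrib]
    simp [inducedW]
  have hcon0 : ∀ S : Finset V,
      (∑ v : V, if ind S v = 0 then ∑ u ∈ Finset.univ.erase v, W v u * ind S u else 0)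
        = α * cutW W S := by
    intro S
    have h1 : ∀ v : V,
        (if ind S v = 0 then ∑ u ∈ Finset.univ.erase v, W v u * ind S u else 0)
          = if v ∈ Sᶜ then α * ∑ u ∈ S, W v u else 0 := by
      intro v
      by_cases h : v ∈ S
      · have hv : ind S v = α := by simp [hind, h]
        rw [if_neg (by rw [hv]; exact hαpos.ne'), if_neg (by simp [h])]
      · have h0 : ind S v = 0 := by simp [hind, h]
        rw [if_pos h0, if_pos (Finset.mem_compl.mpr h), hinner S v,
          Finset.erase_eq_of_notMem h]
    simp only [h1, Finset.sum_ite_mem, Finset.univ_inter]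
    rw [← Finset.mul_sum]
    congr 1
    rw [show cutW W S = ∑ v ∈ Sᶜ, ∑ u ∈ S, W v u from by
      rw [cutW, Finset.sum_comm]
      exact Finset.sum_congr rfl fun v _ => Finset.sum_congr rfl fun u _ => hsym u v]
  have hcostS : ∀ S : Finset V, (∑ v : V, ind S v) = α * S.card := by
    intro S
    simp [hind, Finset.sum_ite_mem, mul_comm]
  have hαI : α * I = A := by rw [hα]; field_simp
  -- the scheme
  refine ⟨{ sig := insert 0 {α}
            sig_mem := ?_
            supp := dsupp.image ind
            val_mem := ?_
            p := fun s => ∑ S ∈ dsupp.filter (fun S => ind S = s), dp S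
            p_nonneg := ?_
            p_sum := ?_ }, rfl, ?_, ?_, ?_, ?_⟩
  · intro θ hθ
    rcases Finset.mem_insert.mp hθ with h | h
    · simp [h]
    · rw [Finset.mem_singleton] at h; exact ⟨h ▸ hαpos.le, h ▸ hα1⟩
  · intro s hs v
    obtain ⟨S, _, rfl⟩ := Finset.mem_image.mp hs
    by_cases h : v ∈ S <;> simp [hind, h]
  · intro s _
    exact Finset.sum_nonneg fun S hS => hdp S (Finset.mem_filter.mp hS).1
  · rw [Finset.sum_fiberwise_of_maps_to (fun S hS => Finset.mem_image_of_mem ind hS)]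
    exact hsum
  all_goals
    (have hexp : ∀ f : (V → ℝ) → ℝ,
        (∑ s ∈ dsupp.image ind, (∑ S ∈ dsupp.filter (fun S => ind S = s), dp S) * f s)
          = ∑ S ∈ dsupp, dp S * f (ind S) := by
      intro f
      rw [← Finset.sum_fiberwise_of_maps_to (g := ind)
        (fun S hS => Finset.mem_image_of_mem ind hS) (fun S => dp S * f (ind S))]
      refine Finset.sum_congr rfl fun s _ => ?_
      rw [Finset.sum_mul]
      refine Finset.sum_congr rfl fun S hS => ?_
      rw [(Finset.mem_filter.mp hS).2])
  · -- exp formula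
    intro f
    exact hexp f
  · -- persuasive
    constructor
    · intro θ hθ hpos
      have hθα : α = θ := by
        rcases Finset.mem_insert.mp hθ with h | h
        · exact absurd h hpos.ne'
        · exact (Finset.mem_singleton.mp h).symm
      subst hθα
      simp only [Scheme.slack, Scheme.Contrib, Scheme.Num, Scheme.exp]
      rw [hexp, hexp]
      simp only [hconα, hnumα]
      have e1 : (∑ S ∈ dsupp, dp S * (α * (inducedW W S - (S.card:ℝ)))) = α * (I - A) := by
        rw [hI, hA, ← Finset.sum_sub_distrib, Finset.mul_sum]
        exact Finset.sum_congr rfl fun S _ => by ring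
      rw [e1, ← hA]
      linear_combination hαI
    · intro _
      simp only [Scheme.slack, Scheme.Contrib, Scheme.Num, Scheme.exp]
      rw [hexp, hexp]
      simp only [hcon0, hnum0]
      have e1 : (∑ S ∈ dsupp, dp S * (α * cutW W S)) = α * C := by
        rw [hC, Finset.mul_sum]
        exact Finset.sum_congr rfl fun S _ => by ring
      rw [e1]
      have hB : (∑ S ∈ dsupp, dp S * ((Fintype.card V:ℝ) - S.card)) ≤ α * C := by
        rw [hα, div_mul_eq_mul_div, le_div_iff₀ hIpos]
        nlinarith [hineq]
      linarith [hB]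
  · -- cost value
    simp only [Scheme.cost, Scheme.exp]
    rw [hexp]
    simp only [hcostS]
    have e1 : (∑ S ∈ dsupp, dp S * (α * (S.card:ℝ))) = α * A := by
      rw [hA, Finset.mul_sum]
      exact Finset.sum_congr rfl fun S _ => by ring
    rw [e1, hα]
    field_simp
  · -- cost bound
    simp only [Scheme.cost, Scheme.exp]
    rw [hexp]
    simp only [hcostS]
    have e1 : (∑ S ∈ dsupp, dp S * (α * (S.card:ℝ))) = α * A := by
      rw [hA, Finset.mul_sum]
      exact Finset.sum_congr rfl fun S _ => by ring
    rw [e1]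
    nlinarith [hES, hα1]
end

section
/- Let V be a finite set of size n, W a collaboration instance on V, Σ ⊆ [0,1] a finite signal space, and D a probability distribution over functions s : V → Σ. Let t be a uniformly random bijection from {1,…,n} to V, independent of s ~ D. Then for every index i ∈ {1,…,n} and every θ ∈ Σ with Num_θ > 0, the conditional expectation E[Σ_{u∈V} W(t(i),u)·s_u ∣ s_{t(i)} = θ] equals θ + Contrib_θ / Num_θ. -/
open Finset

variable {V : Type*}

lemma fiber_const {n : ℕ} {V : Type*} [Fintype V] [DecidableEq V]
    (i : Fin n) (v w : V) :
    (Finset.univ.filter (fun t : Fin n ≃ V => t i = v)).card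
      = (Finset.univ.filter (fun t : Fin n ≃ V => t i = w)).card := by
  apply Finset.card_bij (fun t _ => t.trans (Equiv.swap v w))
  · intro t ht
    simp only [mem_filter, mem_univ, true_and] at ht ⊢
    simp [ht]
  · intro a _ b _ h
    ext x
    simpa using congrArg (fun e : Fin n ≃ V => (Equiv.swap v w).symm (e x)) h
  · intro t' ht'
    simp only [mem_filter, mem_univ, true_and] at ht'
    refine ⟨t'.trans (Equiv.swap v w), ?_, ?_⟩
    · simp only [mem_filter, mem_univ, true_and, Equiv.trans_apply, ht']
      simp
    · ext x; simp

lemma sum_fiber {n : ℕ} {V : Type*} [Fintype V] [DecidableEq V]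
    (i : Fin n) (g : V → ℝ) (v0 : V) :
    ∑ t : Fin n ≃ V, g (t i)
      = ((Finset.univ.filter (fun t : Fin n ≃ V => t i = v0)).card : ℝ) * ∑ v, g v := by
  rw [← Finset.sum_fiberwise_of_maps_to (g := fun t : Fin n ≃ V => t i)
      (fun t _ => Finset.mem_univ (t i)) (fun t => g (t i))]
  rw [Finset.mul_sum]
  refine Finset.sum_congr rfl fun v _ => ?_
  rw [Finset.sum_congr rfl (fun t ht => ?_), Finset.sum_const, nsmul_eq_mul,
    fiber_const i v0 v]
  · simp only [mem_filter] at ht; rw [ht.2]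

/-- Let `t` be a uniformly random bijection `{1,…,n} ≃ V`, independent
of `s ~ D`. For every index `i` and every signal `θ ∈ Σ` with `Num_θ > 0`, the conditional
expectation `E[∑_u W(t(i),u)·s_u ∣ s_{t(i)} = θ]` (computed as `E[X·1_A]/P[A]` on the
product space, where the uniform weight on bijections is `1/#(Fin n ≃ V)`) equals
`θ + Contrib_θ / Num_θ`. -/
theorem statement11 (V : Type*) [Fintype V] [DecidableEq V] (W : V → V → ℝ)
    (hW : IsCollab W) (D : Scheme V) (θ : ℝ) (hθ : θ ∈ D.sig)
    (hNum : 0 < D.Num θ) (i : Fin (Fintype.card V)) :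
    (∑ t : Fin (Fintype.card V) ≃ V, ∑ s ∈ D.supp,
        (1 / (Fintype.card (Fin (Fintype.card V) ≃ V) : ℝ)) * D.p s *
          (if s (t i) = θ then ∑ u, W (t i) u * s u else 0)) /
    (∑ t : Fin (Fintype.card V) ≃ V, ∑ s ∈ D.supp,
        (1 / (Fintype.card (Fin (Fintype.card V) ≃ V) : ℝ)) * D.p s *
          (if s (t i) = θ then 1 else 0))
    = θ + D.Contrib W θ / D.Num θ := by
  classical
  set N : ℝ := (Fintype.card (Fin (Fintype.card V) ≃ V) : ℝ) with hN
  set v0 : V := (Fintype.equivFin V).symm i with hv0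
  set c : ℕ := (Finset.univ.filter (fun t : Fin (Fintype.card V) ≃ V => t i = v0)).card with hc
  have hcpos : 0 < c :=
    Finset.card_pos.mpr ⟨(Fintype.equivFin V).symm, by simp [hv0]⟩
  have hNpos : (0:ℝ) < N := by
    rw [hN]
    have : 0 < Fintype.card (Fin (Fintype.card V) ≃ V) :=
      Fintype.card_pos_iff.mpr ⟨(Fintype.equivFin V).symm⟩
    exact_mod_cast this
  have main : ∀ f : (V → ℝ) → V → ℝ,
      (∑ t : Fin (Fintype.card V) ≃ V, ∑ s ∈ D.supp, (1/N) * D.p s * f s (t i))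
        = ((c:ℝ)/N) * ∑ s ∈ D.supp, D.p s * ∑ v, f s v := by
    intro f
    rw [Finset.sum_comm, Finset.mul_sum]
    refine Finset.sum_congr rfl fun s _ => ?_
    have := sum_fiber i (fun v => (1/N) * D.p s * f s v) v0
    rw [this, ← hc, Finset.mul_sum, Finset.mul_sum, Finset.mul_sum]
    refine Finset.sum_congr rfl fun v _ => ?_
    ring
  have inner : ∀ s : V → ℝ,
      (∑ v, if s v = θ then ∑ u, W v u * s u else 0)
        = θ * (∑ v, if s v = θ then (1:ℝ) else 0)
          + ∑ v, if s v = θ then ∑ u ∈ Finset.univ.erase v, W v u * s u else 0 := by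
    intro s
    rw [Finset.mul_sum, ← Finset.sum_add_distrib]
    refine Finset.sum_congr rfl fun v _ => ?_
    by_cases h : s v = θ
    · simp only [h, if_true, mul_one]
      rw [← Finset.add_sum_erase _ _ (Finset.mem_univ v), hW.2.2 v, one_mul, h]
    · simp [h]
  have hnum : (∑ t : Fin (Fintype.card V) ≃ V, ∑ s ∈ D.supp, (1/N) * D.p s *
        (if s (t i) = θ then ∑ u, W (t i) u * s u else 0))
      = ((c:ℝ)/N) * (θ * D.Num θ + D.Contrib W θ) := by
    rw [main (fun s v => if s v = θ then ∑ u, W v u * s u else 0)]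
    congr 1
    rw [Scheme.Num, Scheme.Contrib, Scheme.exp, Scheme.exp, Finset.mul_sum,
      ← Finset.sum_add_distrib]
    refine Finset.sum_congr rfl fun s _ => ?_
    rw [inner s]
    ring
  have hden : (∑ t : Fin (Fintype.card V) ≃ V, ∑ s ∈ D.supp, (1/N) * D.p s *
        (if s (t i) = θ then (1:ℝ) else 0))
      = ((c:ℝ)/N) * D.Num θ := by
    rw [main (fun s v => if s v = θ then (1:ℝ) else 0)]
    rw [Scheme.Num, Scheme.exp]
  rw [hnum, hden, mul_div_mul_left]
  · field_simp
  · positivity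
end

section
/- Let θ ∈ [0,1]^V be a stable solution on a unit-weight graph G = (V, E). Then there exists a probability distribution D over subsets of V supported on independent sets of G such that for every v ∈ V, P_{S~D}[v ∈ S] = θ_v. -/
/-! Induction on the set `Q` of vertices already handled. Given a distribution on independent
subsets of `Q` with marginals `θ` on `Q`, and `v ∉ Q`, add `v` with a fixed probability `c` to
the drawn sets that miss the neighbourhood `N(v)`. By the union bound such sets have probability
`T ≥ 1 - ∑_{u ∈ N(v)} θ u`, which is `≥ θ v` by stability, so `c = θ v / T ≤ 1` gives `v` the
marginal `θ v` without changing the other marginals. -/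

open Finset

variable {V : Type*}

section IndepSetDistrib

variable [Fintype V] [DecidableEq V]

lemma Stable.add_sum_le_one {W : V → V → ℝ} {θ : V → ℝ} (hθ : Stable W θ) {v : V}
    (hv : 0 < θ v) : θ v + ∑ u ∈ univ.erase v, W v u * θ u ≤ 1 := by
  set s := ∑ u ∈ univ.erase v, W v u * θ u
  by_contra! h
  have hle : θ v ≤ max 0 (1 - s) :=
    (hθ.2 v).2 ⟨le_max_left _ _, by linarith [le_max_right 0 (1 - s)]⟩
  exact (max_lt hv (by linarith)).not_ge hle

noncomputable def marginal (p : Finset V → ℝ) (u : V) : ℝ :=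
  ∑ S ∈ univ.filter (fun S => u ∈ S), p S

lemma marginal_eq_sum_mul (p : Finset V → ℝ) (u : V) :
    marginal p u = ∑ S, p S * if u ∈ S then 1 else 0 := by
  simp only [marginal, sum_filter, mul_ite, mul_one, mul_zero]

lemma sum_not_disjoint_le_sum_marginal {p : Finset V → ℝ} (hp : ∀ S, 0 ≤ p S) (N : Finset V) :
    ∑ S ∈ univ.filter (fun S => ¬Disjoint S N), p S ≤ ∑ u ∈ N, marginal p u := by
  calc ∑ S ∈ univ.filter (fun S => ¬Disjoint S N), p S
      ≤ ∑ S ∈ univ.filter (fun S => ¬Disjoint S N), ∑ u ∈ N, if u ∈ S then p S else 0 := by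
        refine sum_le_sum fun S hS => ?_
        obtain ⟨u, huS, huN⟩ := not_disjoint_iff.1 (mem_filter.1 hS).2
        calc p S = if u ∈ S then p S else 0 := (if_pos huS).symm
          _ ≤ _ := single_le_sum (f := fun u => if u ∈ S then p S else 0)
              (fun w _ => by split_ifs <;> simp [hp S]) huN
    _ ≤ ∑ S, ∑ u ∈ N, if u ∈ S then p S else 0 :=
        sum_le_sum_of_subset_of_nonneg (subset_univ _) fun S _ _ =>
          sum_nonneg fun u _ => by split_ifs <;> simp [hp S]
    _ = ∑ u ∈ N, marginal p u := by
        rw [sum_comm]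
        simp only [marginal, sum_filter]

/-- Law of the set obtained by drawing `R ∼ p` and then adding `v` with probability `a R`. -/
noncomputable def insertWithProb (p : Finset V → ℝ) (v : V) (a : Finset V → ℝ)
    (S : Finset V) : ℝ :=
  ∑ R, p R * ((1 - a R) * (if S = R then 1 else 0) + a R * (if S = insert v R then 1 else 0))

lemma sum_insertWithProb_mul (p : Finset V → ℝ) (v : V) (a f : Finset V → ℝ) :
    ∑ S, insertWithProb p v a S * f S
      = ∑ R, p R * ((1 - a R) * f R + a R * f (insert v R)) := by
  simp only [insertWithProb, sum_mul]
  rw [sum_comm]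
  refine sum_congr rfl fun R _ => ?_
  simp only [mul_assoc, ← mul_sum, add_mul, sum_add_distrib, ite_mul, one_mul, zero_mul,
    sum_ite_eq', mem_univ, if_true]

lemma insertWithProb_nonneg {p a : Finset V → ℝ} (hp : ∀ S, 0 ≤ p S) (ha₀ : ∀ R, 0 ≤ a R)
    (ha₁ : ∀ R, a R ≤ 1) (v : V) (S : Finset V) : 0 ≤ insertWithProb p v a S := by
  refine sum_nonneg fun R _ => mul_nonneg (hp R) (add_nonneg ?_ ?_)
  · exact mul_nonneg (sub_nonneg.2 (ha₁ R)) (by split_ifs <;> norm_num)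
  · exact mul_nonneg (ha₀ R) (by split_ifs <;> norm_num)

lemma sum_insertWithProb (p : Finset V → ℝ) (v : V) (a : Finset V → ℝ) :
    ∑ S, insertWithProb p v a S = ∑ R, p R := by
  simpa using sum_insertWithProb_mul p v a (fun _ => 1)

lemma marginal_insertWithProb_of_ne (p : Finset V → ℝ) (a : Finset V → ℝ) {u v : V}
    (huv : u ≠ v) : marginal (insertWithProb p v a) u = marginal p u := by
  rw [marginal_eq_sum_mul, sum_insertWithProb_mul, marginal_eq_sum_mul]
  refine sum_congr rfl fun R _ => ?_
  simp only [mem_insert, huv, false_or]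
  ring

lemma marginal_insertWithProb_self {p : Finset V → ℝ} (a : Finset V → ℝ) {v : V}
    (hp : ∀ R, p R ≠ 0 → v ∉ R) : marginal (insertWithProb p v a) v = ∑ R, p R * a R := by
  rw [marginal_eq_sum_mul, sum_insertWithProb_mul]
  refine sum_congr rfl fun R _ => ?_
  by_cases hR : p R = 0
  · simp [hR]
  · simp [hp R hR]

lemma exists_of_insertWithProb_ne_zero {p a : Finset V → ℝ} {v : V} {S : Finset V}
    (hS : insertWithProb p v a S ≠ 0) :
    ∃ R, p R ≠ 0 ∧ (S = R ∨ a R ≠ 0 ∧ S = insert v R) := by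
  obtain ⟨R, -, hR⟩ := exists_ne_zero_of_sum_ne_zero hS
  refine ⟨R, left_ne_zero_of_mul hR, ?_⟩
  by_contra! h
  apply hR
  rcases eq_or_ne (a R) 0 with ha | ha
  · simp [h.1, ha]
  · simp [h.1, h.2 ha]

noncomputable def nbhd (W : V → V → ℝ) (v : V) : Finset V :=
  (univ.erase v).filter (fun u => W v u ≠ 0)

lemma sum_nbhd_eq {W : V → V → ℝ} (hU : UnitWeight W) (θ : V → ℝ) (v : V) :
    ∑ u ∈ nbhd W v, θ u = ∑ u ∈ univ.erase v, W v u * θ u := by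
  rw [nbhd, sum_filter]
  refine sum_congr rfl fun u hu => ?_
  rcases hU v u (ne_of_mem_erase hu).symm with h | h <;> simp [h]

lemma pairwise_insert_of_disjoint_nbhd {W : V → V → ℝ} (hW : IsCollab W) {v : V} {R : Finset V}
    (hR : (R : Set V).Pairwise (fun u w => W u w = 0))
    (hdisj : Disjoint R (nbhd W v)) :
    ((insert v R : Finset V) : Set V).Pairwise (fun u w => W u w = 0) := by
  rw [coe_insert]
  refine hR.insert fun u hu hvu => ?_
  have hWvu : W v u = 0 := by
    by_contra h
    exact disjoint_left.1 hdisj hu (by simp [nbhd, Ne.symm hvu, h])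
  exact ⟨hWvu, by rw [hW.1, hWvu]⟩

lemma exists_mem_Icc_mul_eq {x T : ℝ} (hx : 0 ≤ x) (hxT : x ≤ T) :
    ∃ c ∈ Set.Icc (0 : ℝ) 1, c * T = x := by
  rcases hx.eq_or_lt with rfl | hx
  · exact ⟨0, by simp, zero_mul T⟩
  · exact ⟨x / T, ⟨div_nonneg hx.le (by linarith), div_le_one_of_le₀ hxT (by linarith)⟩,
      div_mul_cancel₀ x (by linarith)⟩

structure IsIndepSetDistrib (W : V → V → ℝ) (θ : V → ℝ) (Q : Finset V)
    (p : Finset V → ℝ) : Prop where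
  nonneg : ∀ S, 0 ≤ p S
  sum_eq_one : ∑ S, p S = 1
  subset : ∀ {S}, p S ≠ 0 → S ⊆ Q
  pairwise : ∀ {S}, p S ≠ 0 → (S : Set V).Pairwise (fun u w => W u w = 0)
  marginal_eq : ∀ {u}, u ∈ Q → marginal p u = θ u

namespace IsIndepSetDistrib

variable {W : V → V → ℝ} {θ : V → ℝ} {Q : Finset V} {p : Finset V → ℝ}

lemma empty : IsIndepSetDistrib W θ ∅ (fun S => if S = ∅ then 1 else 0) where
  nonneg S := by split_ifs <;> norm_num
  sum_eq_one := by simp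
  subset hS := by simp_all
  pairwise hS := by simp_all
  marginal_eq hu := absurd hu (notMem_empty _)

lemma marginal_le (h : IsIndepSetDistrib W θ Q p) (hθ : ∀ u, 0 ≤ θ u) (u : V) :
    marginal p u ≤ θ u := by
  by_cases hu : u ∈ Q
  · exact (h.marginal_eq hu).le
  · have hzero : marginal p u = 0 :=
      sum_eq_zero fun S hS => by_contra fun hS0 => hu (h.subset hS0 (mem_filter.1 hS).2)
    exact hzero ▸ hθ u

/-- Union bound over the neighbourhood, then stability at `v`. -/
lemma le_sum_disjoint_nbhd (h : IsIndepSetDistrib W θ Q p) (hU : UnitWeight W)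
    (hθ : Stable W θ) (v : V) :
    θ v ≤ ∑ S ∈ univ.filter (fun S => Disjoint S (nbhd W v)), p S := by
  rcases (hθ.1.1 v).eq_or_lt with hv | hv
  · exact hv ▸ sum_nonneg fun S _ => h.nonneg S
  have hsplit := sum_filter_add_sum_filter_not univ (fun S => Disjoint S (nbhd W v)) p
  have hmeet : ∑ S ∈ univ.filter (fun S => ¬Disjoint S (nbhd W v)), p S
      ≤ ∑ u ∈ univ.erase v, W v u * θ u :=
    calc _ ≤ ∑ u ∈ nbhd W v, marginal p u := sum_not_disjoint_le_sum_marginal h.nonneg _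
      _ ≤ ∑ u ∈ nbhd W v, θ u := sum_le_sum fun u _ => h.marginal_le hθ.1.1 u
      _ = _ := sum_nbhd_eq hU θ v
  linarith [hθ.add_sum_le_one hv, h.sum_eq_one]

lemma exists_insert (h : IsIndepSetDistrib W θ Q p) (hW : IsCollab W) (hU : UnitWeight W)
    (hθ : Stable W θ) {v : V} (hvQ : v ∉ Q) :
    ∃ q, IsIndepSetDistrib W θ (insert v Q) q := by
  obtain ⟨c, ⟨hc₀, hc₁⟩, hcT⟩ :=
    exists_mem_Icc_mul_eq (hθ.1.1 v) (h.le_sum_disjoint_nbhd hU hθ v)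
  set a : Finset V → ℝ := fun R => if Disjoint R (nbhd W v) then c else 0
  have hvR : ∀ R, p R ≠ 0 → v ∉ R := fun R hR hv => hvQ (h.subset hR hv)
  have ha₀ : ∀ R, 0 ≤ a R := fun R => by simp only [a]; split_ifs <;> linarith
  have ha₁ : ∀ R, a R ≤ 1 := fun R => by simp only [a]; split_ifs <;> linarith
  refine ⟨insertWithProb p v a, insertWithProb_nonneg h.nonneg ha₀ ha₁ v,
    (sum_insertWithProb p v a).trans h.sum_eq_one, fun hS => ?_, fun hS => ?_, fun hu => ?_⟩
  · obtain ⟨R, hR, rfl | ⟨-, rfl⟩⟩ := exists_of_insertWithProb_ne_zero hS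
    · exact (h.subset hR).trans (subset_insert v Q)
    · exact insert_subset_insert v (h.subset hR)
  · obtain ⟨R, hR, rfl | ⟨haR, rfl⟩⟩ := exists_of_insertWithProb_ne_zero hS
    · exact h.pairwise hR
    · have hdisj : Disjoint R (nbhd W v) := by_contra fun hd => haR (if_neg hd)
      exact pairwise_insert_of_disjoint_nbhd hW (h.pairwise hR) hdisj
  · rcases mem_insert.1 hu with rfl | hu
    · rw [marginal_insertWithProb_self a hvR, ← hcT, sum_filter, mul_sum]
      exact sum_congr rfl fun R _ => by simp only [a, mul_ite, mul_zero, mul_comm]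
    · rw [marginal_insertWithProb_of_ne p a (ne_of_mem_of_not_mem hu hvQ), h.marginal_eq hu]

end IsIndepSetDistrib

lemma exists_isIndepSetDistrib {W : V → V → ℝ} (hW : IsCollab W) (hU : UnitWeight W)
    {θ : V → ℝ} (hθ : Stable W θ) (Q : Finset V) : ∃ p, IsIndepSetDistrib W θ Q p := by
  induction Q using Finset.induction_on with
  | empty => exact ⟨_, IsIndepSetDistrib.empty⟩
  | insert v Q hvQ ih =>
    obtain ⟨p, hp⟩ := ih
    exact hp.exists_insert hW hU hθ hvQ

end IndepSetDistrib

/-- Any stable solution `θ ∈ [0,1]^V` on a unit-weight graph is the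
marginal of a probability distribution over independent sets: there is a distribution `p`
over subsets of `V`, supported on independent sets, with `P[v ∈ S] = θ v` for all `v`. -/
theorem statement12 (V : Type*) [Fintype V] [DecidableEq V] (W : V → V → ℝ)
    (hW : IsCollab W) (hU : UnitWeight W)
    (θ : V → ℝ) (hθ : Stable W θ) :
    ∃ p : Finset V → ℝ,
      (∀ S : Finset V, 0 ≤ p S) ∧
      (∑ S : Finset V, p S = 1) ∧
      (∀ S : Finset V, p S ≠ 0 → ∀ u ∈ S, ∀ v ∈ S, u ≠ v → W u v = 0) ∧
      (∀ v : V, ∑ S ∈ Finset.univ.filter (fun S : Finset V => v ∈ S), p S = θ v) := by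
  obtain ⟨p, hp⟩ := exists_isIndepSetDistrib hW hU hθ univ
  exact ⟨p, hp.nonneg, hp.sum_eq_one, fun S hS _ hu _ hw huw => hp.pairwise hS hu hw huw,
    fun v => hp.marginal_eq (mem_univ v)⟩
end

section
/- Let DS be a dominating set of a unit-weight graph G = (V, E), and let IS be a maximal independent set of the subgraph of G induced on V ∖ DS. Then Cut(IS, V ∖ IS) ≥ |V| − |DS|. -/
open Finset

variable {V : Type*}

/-- If `DS` is a dominating set of a unit-weight graph and `IS` is a
maximal independent set of the subgraph induced on `V ∖ DS`, then
`Cut(IS, V ∖ IS) ≥ |V| − |DS|`. -/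
theorem statement13 (V : Type*) [Fintype V] [DecidableEq V] (W : V → V → ℝ)
    (hW : IsCollab W) (hU : UnitWeight W)
    (DS IS : Finset V)
    (hdom : ∀ v : V, v ∉ DS → ∃ u ∈ DS, W v u = 1)
    (hsub : IS ⊆ DSᶜ)
    (hind : ∀ u ∈ IS, ∀ v ∈ IS, u ≠ v → W u v = 0)
    (hmax : ∀ v ∈ DSᶜ, v ∉ IS → ∃ u ∈ IS, W v u = 1) :
    (Fintype.card V : ℝ) - (DS.card : ℝ) ≤ cutW W IS := by
  classical
  have hnn : ∀ u v, 0 ≤ W u v := fun u v => (hW.2.1 u v).1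
  set f : V → V × V := fun v =>
    if hv : v ∈ IS then
      (v, Classical.choose (hdom v (Finset.mem_compl.mp (hsub hv))))
    else if hv2 : v ∈ DSᶜ then
      (Classical.choose (hmax v hv2 hv), v)
    else (v, v) with hf
  have key : ∀ v ∈ DSᶜ, f v ∈ IS ×ˢ ISᶜ ∧ W (f v).1 (f v).2 = 1 := by
    intro v hv
    by_cases hvi : v ∈ IS
    · have hspec := Classical.choose_spec (hdom v (Finset.mem_compl.mp (hsub hvi)))
      simp only [hf, dif_pos hvi]
      refine ⟨Finset.mem_product.mpr ⟨hvi, Finset.mem_compl.mpr ?_⟩, hspec.2⟩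
      intro hmem
      exact Finset.mem_compl.mp (hsub hmem) hspec.1
    · have hspec := Classical.choose_spec (hmax v hv hvi)
      simp only [hf, dif_neg hvi, dif_pos hv]
      refine ⟨Finset.mem_product.mpr ⟨hspec.1, Finset.mem_compl.mpr hvi⟩, ?_⟩
      rw [hW.1]; exact hspec.2
  have hinj : ∀ a ∈ DSᶜ, ∀ b ∈ DSᶜ, f a = f b → a = b := by
    intro a ha b hb hab
    by_cases hai : a ∈ IS <;> by_cases hbi : b ∈ IS
    · have := congrArg Prod.fst hab
      simpa [hf, dif_pos hai, dif_pos hbi] using this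
    · exfalso
      have h1 := Classical.choose_spec (hdom a (Finset.mem_compl.mp (hsub hai)))
      simp only [hf, dif_pos hai, dif_neg hbi, dif_pos hb, Prod.ext_iff] at hab
      exact Finset.mem_compl.mp hb (hab.2 ▸ h1.1)
    · exfalso
      have h1 := Classical.choose_spec (hdom b (Finset.mem_compl.mp (hsub hbi)))
      simp only [hf, dif_neg hai, dif_pos ha, dif_pos hbi, Prod.ext_iff] at hab
      exact Finset.mem_compl.mp ha (hab.2 ▸ h1.1)
    · simp only [hf, dif_neg hai, dif_pos ha, dif_neg hbi, dif_pos hb, Prod.ext_iff] at hab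
      exact hab.2
  have himg : DSᶜ.image f ⊆ IS ×ˢ ISᶜ := by
    intro p hp
    obtain ⟨v, hv, rfl⟩ := Finset.mem_image.mp hp
    exact (key v hv).1
  have h1 : ∑ p ∈ DSᶜ.image f, W p.1 p.2 = ∑ v ∈ DSᶜ, W (f v).1 (f v).2 :=
    Finset.sum_image hinj
  have h2 : ∑ v ∈ DSᶜ, W (f v).1 (f v).2 = (DSᶜ.card : ℝ) := by
    rw [Finset.sum_congr rfl (fun v hv => (key v hv).2)]
    simp
  have h3 : ∑ p ∈ DSᶜ.image f, W p.1 p.2 ≤ ∑ p ∈ IS ×ˢ ISᶜ, W p.1 p.2 :=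
    Finset.sum_le_sum_of_subset_of_nonneg himg (fun p _ _ => hnn p.1 p.2)
  have h4 : cutW W IS = ∑ p ∈ IS ×ˢ ISᶜ, W p.1 p.2 := by
    rw [cutW, Finset.sum_product]
  have h5 : (DSᶜ.card : ℝ) = (Fintype.card V : ℝ) - (DS.card : ℝ) := by
    rw [Finset.card_compl]
    have := Finset.card_le_univ DS
    push_cast [Nat.cast_sub this]
    ring
  linarith [h1, h2, h3]
end

section
/- Let W be a collaboration instance on a finite vertex set V of size n, and let θ ∈ [0,1]^V satisfy Wθ ≥ 1 coordinatewise (a feasible solution subject to IR). Let D be the distribution of the random subset S ⊆ V that includes each v ∈ V independently with probability θ_v. Then: (1) E_{S~D}[|S|] = ‖θ‖₁; (2) E_{S~D}[Induced(S)] ≤ ‖θ‖₁² + ‖θ‖₁; (3) E_{S~D}[Cut(S, V∖S)] ≥ n − 2‖θ‖₁. -/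
open Finset

variable {V : Type*}

section Aux
variable {V : Type*} [Fintype V] [DecidableEq V]


lemma sum_prod_compl' (f g : V → ℝ) :
    ∑ S : Finset V, (∏ v ∈ S, f v) * ∏ v ∈ Sᶜ, g v = ∏ v, (f v + g v) := by
  rw [Finset.prod_add, Finset.powerset_univ]
  exact Finset.sum_congr rfl fun S _ => by rw [← Finset.compl_eq_univ_sdiff]

lemma marg' (θ : V → ℝ) (B C : Finset V) (hBC : Disjoint B C) :
    ∑ S : Finset V, ((∏ v ∈ S, θ v) * ∏ v ∈ Sᶜ, (1 - θ v)) *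
      (if B ⊆ S ∧ C ⊆ Sᶜ then 1 else 0) =
    (∏ b ∈ B, θ b) * ∏ c ∈ C, (1 - θ c) := by
  have key : ∀ S : Finset V,
      ((∏ v ∈ S, θ v) * ∏ v ∈ Sᶜ, (1 - θ v)) * (if B ⊆ S ∧ C ⊆ Sᶜ then 1 else 0)
      = (∏ v ∈ S, θ v * (if v ∈ C then 0 else 1)) *
        ∏ v ∈ Sᶜ, (1 - θ v) * (if v ∈ B then 0 else 1) := by
    intro S
    by_cases h : B ⊆ S ∧ C ⊆ Sᶜ
    · rw [if_pos h, mul_one]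
      congr 1
      · refine Finset.prod_congr rfl fun v hv => ?_
        have : v ∉ C := fun hc => (Finset.mem_compl.mp (h.2 hc)) hv
        rw [if_neg this, mul_one]
      · refine Finset.prod_congr rfl fun v hv => ?_
        have : v ∉ B := fun hb => (Finset.mem_compl.mp hv) (h.1 hb)
        rw [if_neg this, mul_one]
    · rw [if_neg h, mul_zero]
      rcases not_and_or.mp h with h1 | h2
      · obtain ⟨b, hbB, hbS⟩ := Finset.not_subset.mp h1
        have : (∏ v ∈ Sᶜ, (1 - θ v) * (if v ∈ B then 0 else 1)) = 0 :=
          Finset.prod_eq_zero (Finset.mem_compl.mpr hbS) (by rw [if_pos hbB, mul_zero])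
        rw [this, mul_zero]
      · obtain ⟨c, hcC, hcS⟩ := Finset.not_subset.mp h2
        have hcS' : c ∈ S := by simpa using hcS
        have : (∏ v ∈ S, θ v * (if v ∈ C then 0 else 1)) = 0 :=
          Finset.prod_eq_zero hcS' (by rw [if_pos hcC, mul_zero])
        rw [this, zero_mul]
  rw [Finset.sum_congr rfl fun S _ => key S, sum_prod_compl']
  have hfun : ∀ v : V, θ v * (if v ∈ C then 0 else 1) + (1 - θ v) * (if v ∈ B then 0 else 1)
      = if v ∈ B then θ v else if v ∈ C then (1 - θ v) else 1 := by
    intro v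
    by_cases hb : v ∈ B
    · have hc : v ∉ C := Finset.disjoint_left.mp hBC hb
      simp [hb, hc]
    · by_cases hc : v ∈ C <;> simp [hb, hc]
  rw [Finset.prod_congr rfl fun v _ => hfun v]
  rw [← Finset.prod_mul_prod_compl (B ∪ C)]
  have h1 : (∏ v ∈ (B ∪ C)ᶜ, (if v ∈ B then θ v else if v ∈ C then (1 - θ v) else 1)) = 1 := by
    refine Finset.prod_eq_one fun v hv => ?_
    have := Finset.mem_compl.mp hv
    rw [Finset.mem_union] at this
    push_neg at this
    rw [if_neg this.1, if_neg this.2]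
  rw [h1, mul_one, Finset.prod_union hBC]
  congr 1
  · exact Finset.prod_congr rfl fun v hv => if_pos hv
  · refine Finset.prod_congr rfl fun v hv => ?_
    rw [if_neg (Finset.disjoint_right.mp hBC hv), if_pos hv]

lemma Esingle (θ : V → ℝ) (v : V) :
    ∑ S : Finset V, ((∏ w ∈ S, θ w) * ∏ w ∈ Sᶜ, (1 - θ w)) * (if v ∈ S then 1 else 0)
      = θ v := by
  have := marg' θ {v} ∅ (Finset.disjoint_empty_right _)
  simpa [Finset.singleton_subset_iff] using this

lemma Epair (θ : V → ℝ) (u v : V) (h : u ≠ v) :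
    ∑ S : Finset V, ((∏ w ∈ S, θ w) * ∏ w ∈ Sᶜ, (1 - θ w)) *
      (if u ∈ S ∧ v ∈ S then 1 else 0) = θ u * θ v := by
  have := marg' θ {u, v} ∅ (Finset.disjoint_empty_right _)
  simpa [Finset.insert_subset_iff, Finset.singleton_subset_iff, Finset.prod_pair h] using this

lemma Ecutpt (θ : V → ℝ) (u v : V) (h : u ≠ v) :
    ∑ S : Finset V, ((∏ w ∈ S, θ w) * ∏ w ∈ Sᶜ, (1 - θ w)) *
      (if u ∈ S ∧ v ∉ S then 1 else 0) = θ u * (1 - θ v) := by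
  have := marg' θ {u} {v} (by simp [h, h.symm])
  simpa [Finset.singleton_subset_iff] using this

lemma sum_restrict (f : V → ℝ) (S : Finset V) :
    ∑ v ∈ S, f v = ∑ v : V, if v ∈ S then f v else 0 := by
  rw [Finset.sum_ite_mem, Finset.univ_inter]

end Aux

/-- Let `θ ∈ [0,1]^V` be feasible subject to IR, and let `D` be the
distribution of the random subset including each `v` independently with probability `θ v`
(so `P[S] = ∏_{v∈S} θ v · ∏_{v∉S} (1 − θ v)`). Then `E[|S|] = ‖θ‖₁`,
`E[Induced(S)] ≤ ‖θ‖₁² + ‖θ‖₁`, and `E[Cut(S, V∖S)] ≥ n − 2‖θ‖₁`. -/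
theorem statement14 (V : Type*) [Fintype V] [DecidableEq V] (W : V → V → ℝ)
    (hW : IsCollab W) (θ : V → ℝ)
    (hθ : ∀ v, 0 ≤ θ v ∧ θ v ≤ 1)
    (hfeas : ∀ v, 1 ≤ ∑ u, W v u * θ u) :
    (∑ S : Finset V, ((∏ v ∈ S, θ v) * ∏ v ∈ Sᶜ, (1 - θ v)) * (S.card : ℝ) = ∑ v, θ v) ∧
    (∑ S : Finset V, ((∏ v ∈ S, θ v) * ∏ v ∈ Sᶜ, (1 - θ v)) * inducedW W S ≤
      (∑ v, θ v) ^ 2 + ∑ v, θ v) ∧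
    ((Fintype.card V : ℝ) - 2 * ∑ v, θ v ≤
      ∑ S : Finset V, ((∏ v ∈ S, θ v) * ∏ v ∈ Sᶜ, (1 - θ v)) * cutW W S) := by
  obtain ⟨hsymm, hbd, hdiag⟩ := hW
  set p : Finset V → ℝ := fun S => (∏ v ∈ S, θ v) * ∏ v ∈ Sᶜ, (1 - θ v) with hp
  have card_eq : ∀ S : Finset V, (S.card : ℝ) = ∑ v : V, (if v ∈ S then (1:ℝ) else 0) := by
    intro S
    rw [Finset.sum_ite_mem, Finset.univ_inter, Finset.sum_const, nsmul_eq_mul, mul_one]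
  have part1 : ∑ S : Finset V, p S * (S.card : ℝ) = ∑ v, θ v := by
    simp_rw [card_eq, Finset.mul_sum]
    rw [Finset.sum_comm]
    exact Finset.sum_congr rfl fun v _ => Esingle θ v
  refine ⟨part1, ?_, ?_⟩
  -- Part 2
  · have ind_eq : ∀ S : Finset V, inducedW W S
        = ∑ u : V, ∑ v : V, W u v * (if u ∈ S ∧ v ∈ S then (1:ℝ) else 0) := by
      intro S
      unfold inducedW
      rw [sum_restrict (fun u => ∑ v ∈ S, W u v) S]
      refine Finset.sum_congr rfl fun u _ => ?_
      by_cases hu : u ∈ S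
      · rw [if_pos hu, sum_restrict (W u) S]
        refine Finset.sum_congr rfl fun v _ => ?_
        by_cases hv : v ∈ S <;> simp [hu, hv]
      · rw [if_neg hu]
        symm
        refine Finset.sum_eq_zero fun v _ => by simp [hu]
    have E2 : ∑ S : Finset V, p S * inducedW W S
        = ∑ u : V, ∑ v : V, W u v * (if u = v then θ u else θ u * θ v) := by
      simp_rw [ind_eq, Finset.mul_sum]
      rw [Finset.sum_comm]
      refine Finset.sum_congr rfl fun u _ => ?_
      rw [Finset.sum_comm]
      refine Finset.sum_congr rfl fun v _ => ?_
      rcases eq_or_ne u v with rfl | huv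
      · simp only [and_self, eq_self_iff_true, if_true]
        simp_rw [show ∀ S : Finset V,
          p S * (W u u * (if u ∈ S then (1:ℝ) else 0))
            = W u u * (p S * (if u ∈ S then (1:ℝ) else 0)) from fun S => by ring]
        rw [← Finset.mul_sum, Esingle θ u]
      · rw [if_neg huv]
        simp_rw [show ∀ S : Finset V,
          p S * (W u v * (if u ∈ S ∧ v ∈ S then (1:ℝ) else 0))
            = W u v * (p S * (if u ∈ S ∧ v ∈ S then (1:ℝ) else 0)) from fun S => by ring]
        rw [← Finset.mul_sum, Epair θ u v huv]
    rw [E2]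
    have bound : ∀ u v : V, W u v * (if u = v then θ u else θ u * θ v)
        ≤ θ u * θ v + (if u = v then θ u else 0) := by
      intro u v
      rcases eq_or_ne u v with rfl | huv
      · simp only [eq_self_iff_true, if_true]
        rw [hdiag u, one_mul]
        nlinarith [mul_self_nonneg (θ u)]
      · rw [if_neg huv, if_neg huv, add_zero]
        exact mul_le_of_le_one_left (mul_nonneg (hθ u).1 (hθ v).1) (hbd u v).2
    calc ∑ u : V, ∑ v : V, W u v * (if u = v then θ u else θ u * θ v)
        ≤ ∑ u : V, ∑ v : V, (θ u * θ v + (if u = v then θ u else 0)) :=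
          Finset.sum_le_sum fun u _ => Finset.sum_le_sum fun v _ => bound u v
      _ = (∑ v, θ v) ^ 2 + ∑ v, θ v := by
          simp_rw [Finset.sum_add_distrib]
          congr 1
          · rw [← Finset.sum_mul_sum, sq]
          · refine Finset.sum_congr rfl fun u _ => ?_
            rw [Finset.sum_ite_eq Finset.univ u fun _ => θ u, if_pos (Finset.mem_univ u)]
  -- Part 3
  · have cut_eq : ∀ S : Finset V, cutW W S
        = ∑ u : V, ∑ v : V, W u v * (if u ∈ S ∧ v ∉ S then (1:ℝ) else 0) := by
      intro S
      unfold cutW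
      rw [sum_restrict (fun u => ∑ v ∈ Sᶜ, W u v) S]
      refine Finset.sum_congr rfl fun u _ => ?_
      by_cases hu : u ∈ S
      · rw [if_pos hu, sum_restrict (W u) Sᶜ]
        refine Finset.sum_congr rfl fun v _ => ?_
        by_cases hv : v ∈ S <;> simp [hu, hv]
      · rw [if_neg hu]
        symm
        refine Finset.sum_eq_zero fun v _ => by simp [hu]
    have E3 : ∑ S : Finset V, p S * cutW W S
        = ∑ u : V, ∑ v : V, W u v * (if u = v then 0 else θ u * (1 - θ v)) := by
      simp_rw [cut_eq, Finset.mul_sum]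
      rw [Finset.sum_comm]
      refine Finset.sum_congr rfl fun u _ => ?_
      rw [Finset.sum_comm]
      refine Finset.sum_congr rfl fun v _ => ?_
      rcases eq_or_ne u v with rfl | huv
      · simp
      · rw [if_neg huv]
        simp_rw [show ∀ S : Finset V,
          p S * (W u v * (if u ∈ S ∧ v ∉ S then (1:ℝ) else 0))
            = W u v * (p S * (if u ∈ S ∧ v ∉ S then (1:ℝ) else 0)) from fun S => by ring]
        rw [← Finset.mul_sum, Ecutpt θ u v huv]
    rw [E3, Finset.sum_comm]
    have inner : ∀ v : V, (1 : ℝ) - 2 * θ v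
        ≤ ∑ u : V, W u v * (if u = v then 0 else θ u * (1 - θ v)) := by
      intro v
      have hA : 1 ≤ ∑ u, W v u * θ u := hfeas v
      have hsum : ∑ u : V, W u v * (if u = v then 0 else θ u * (1 - θ v))
          = (1 - θ v) * ((∑ u, W v u * θ u) - θ v) := by
        rw [show (1 - θ v) * ((∑ u, W v u * θ u) - θ v)
            = ∑ u : V, ((1 - θ v) * (W v u * θ u) - (if u = v then (1 - θ v) * θ v else 0)) by
          rw [Finset.sum_sub_distrib, ← Finset.mul_sum,
            Finset.sum_ite_eq' Finset.univ v fun _ => (1 - θ v) * θ v,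
            if_pos (Finset.mem_univ v)]
          ring]
        refine Finset.sum_congr rfl fun u _ => ?_
        rcases eq_or_ne u v with rfl | huv
        · rw [if_pos rfl, if_pos rfl, hdiag, mul_zero]
          ring
        · rw [if_neg huv, if_neg huv, hsymm u v]
          ring
      rw [hsum]
      have h1 : (0:ℝ) ≤ 1 - θ v := by linarith [(hθ v).2]
      have h2 : 1 - θ v ≤ (∑ u, W v u * θ u) - θ v := by linarith
      nlinarith [mul_le_mul_of_nonneg_left h2 h1, sq_nonneg (θ v)]
    calc (Fintype.card V : ℝ) - 2 * ∑ v, θ v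
        = ∑ v : V, ((1:ℝ) - 2 * θ v) := by
          rw [Finset.sum_sub_distrib, ← Finset.mul_sum, Finset.sum_const, nsmul_eq_mul, mul_one,
            Finset.card_univ]
      _ ≤ _ := Finset.sum_le_sum fun v _ => inner v
end

section
/- Let W be a collaboration instance on a finite vertex set V of size n, and suppose θ : V → ℝ satisfies θ ≥ 0 and Wθ = 1 coordinatewise (a non-wasteful feasible solution). Then ‖θ‖₁ = OPT, i.e., θ minimizes the total workload among all feasible solutions. -/
open Finset

variable {V : Type*}

/-- A non-wasteful feasible solution (`θ ≥ 0` with `Wθ = 1`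
coordinatewise) achieves the optimum: `‖θ‖₁ = OPT`. -/
theorem statement15 (V : Type*) [Fintype V] (W : V → V → ℝ)
    (hW : IsCollab W) (θ : V → ℝ)
    (hθ : ∀ v, 0 ≤ θ v)
    (heq : ∀ v, ∑ u, W v u * θ u = 1) :
    ∑ v, θ v = OPT W := by
  unfold OPT
  obtain ⟨hsym, hrange, hdiag⟩ := hW
  have key : ∀ θ' : V → ℝ, Feasible W θ' → ∑ v, θ v ≤ ∑ v, θ' v := by
    intro θ' ⟨h1, h2⟩
    calc ∑ v, θ v ≤ ∑ v, θ v * ∑ u, W v u * θ' u := by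
          apply Finset.sum_le_sum
          intro v _
          nth_rewrite 1 [← mul_one (θ v)]
          exact mul_le_mul_of_nonneg_left (h2 v) (hθ v)
      _ = ∑ v, ∑ u, θ v * (W v u * θ' u) := by
          simp [Finset.mul_sum]
      _ = ∑ u, ∑ v, θ v * (W v u * θ' u) := Finset.sum_comm
      _ = ∑ u, θ' u * ∑ v, W u v * θ v := by
          apply Finset.sum_congr rfl
          intro u _
          rw [Finset.mul_sum]
          apply Finset.sum_congr rfl
          intro v _
          rw [hsym u v]; ring
      _ = ∑ u, θ' u := by simp [heq]
  have hmem : (∑ v, θ v) ∈ {c : ℝ | ∃ θ : V → ℝ, Feasible W θ ∧ c = ∑ v, θ v} := by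
    refine ⟨θ, ⟨hθ, fun v => (heq v).ge⟩, rfl⟩
  refine le_antisymm ?_ ?_
  · apply le_csInf ⟨_, hmem⟩
    rintro c ⟨θ', hf, rfl⟩
    exact key θ' hf
  · apply csInf_le ⟨∑ v, θ v, ?_⟩ hmem
    rintro c ⟨θ', hf, rfl⟩
    exact key θ' hf
end

section
/- Let G be a unit-weight collaboration instance on a finite vertex set V of size n, and let θ ∈ [0,1]^V be a feasible solution (Wθ ≥ 1 coordinatewise). Then ‖Wθ‖₁ ≥ n + ‖θ‖₁ − OPT. -/
open Finset

variable {V : Type*}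

theorem key_lemma {V : Type*} [Fintype V] (W : V → V → ℝ)
    (hW : (∀ u v, W u v = W v u) ∧ (∀ u v, 0 ≤ W u v ∧ W u v ≤ 1) ∧ (∀ v, W v v = 1))
    (hU : ∀ u v : V, u ≠ v → W u v = 0 ∨ W u v = 1) (θ : V → ℝ)
    (hθ : ∀ v, 0 ≤ θ v ∧ θ v ≤ 1)
    (hfeas : ∀ v, 1 ≤ ∑ u, W v u * θ u)
    (θ' : V → ℝ) (h0 : ∀ v, 0 ≤ θ' v) (h1 : ∀ v, 1 ≤ ∑ u, W v u * θ' u) :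
    (Fintype.card V : ℝ) + (∑ v, θ v) - (∑ v, θ' v) ≤ ∑ v, ∑ u, W v u * θ u := by
  obtain ⟨hsym, hbd, hdiag⟩ := hW
  set φ : V → ℝ := fun v => min (θ' v) 1 with hφ
  have hφ0 : ∀ v, 0 ≤ φ v := fun v => le_min (h0 v) zero_le_one
  have hφ1 : ∀ v, φ v ≤ 1 := fun v => min_le_right _ _
  have hφle : ∀ v, φ v ≤ θ' v := fun v => min_le_left _ _
  have hφfeas : ∀ v, 1 ≤ ∑ u, W v u * φ u := by
    intro v
    by_cases hex : ∃ u, W v u ≠ 0 ∧ 1 ≤ θ' u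
    · obtain ⟨u, hWu, hu⟩ := hex
      have hW1 : W v u = 1 := by
        by_cases huv : u = v
        · subst huv; exact hdiag u
        · rcases hU v u (Ne.symm huv) with h | h
          · exact absurd h hWu
          · exact h
      have hφu : φ u = 1 := min_eq_right hu
      calc (1:ℝ) = W v u * φ u := by rw [hW1, hφu]; ring
        _ ≤ ∑ u, W v u * φ u :=
          Finset.single_le_sum (fun x _ => mul_nonneg (hbd v x).1 (hφ0 x)) (mem_univ u)
    · push_neg at hex
      have heq : ∀ u, W v u * φ u = W v u * θ' u := by
        intro u
        by_cases hWu : W v u = 0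
        · rw [hWu]; ring
        · have := hex u hWu
          rw [hφ]; simp only []
          rw [min_eq_left (le_of_lt this)]
      calc (1:ℝ) ≤ ∑ u, W v u * θ' u := h1 v
        _ = ∑ u, W v u * φ u := by simp_rw [heq]
  have step1 : ∑ u, (1 - φ u) ≤ ∑ u, (1 - φ u) * (∑ x, W u x * θ x) :=
    Finset.sum_le_sum fun u _ =>
      le_mul_of_one_le_right (by linarith [hφ1 u]) (hfeas u)
  have step2 : ∑ u, (1 - φ u) * (∑ x, W u x * θ x)
      = ∑ x, θ x * (∑ u, W x u * (1 - φ u)) := by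
    simp_rw [Finset.mul_sum]
    rw [Finset.sum_comm]
    apply Finset.sum_congr rfl
    intro x _
    apply Finset.sum_congr rfl
    intro u _
    rw [hsym x u]; ring
  have step3 : ∑ x, θ x * (∑ u, W x u * (1 - φ u))
      ≤ ∑ x, θ x * ((∑ u, W x u) - 1) := by
    apply Finset.sum_le_sum
    intro x _
    apply mul_le_mul_of_nonneg_left _ (hθ x).1
    have hexp : ∑ u, W x u * (1 - φ u) = (∑ u, W x u) - ∑ u, W x u * φ u := by
      rw [← Finset.sum_sub_distrib]
      exact Finset.sum_congr rfl fun u _ => by ring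
    rw [hexp]
    linarith [hφfeas x]
  have e1 : ∑ x, θ x * ((∑ u, W x u) - 1) = (∑ x, ∑ u, θ x * W x u) - ∑ x, θ x := by
    rw [← Finset.sum_sub_distrib]
    apply Finset.sum_congr rfl
    intro x _
    rw [mul_sub, mul_one, Finset.mul_sum]
  have e2 : ∑ x, ∑ u, θ x * W x u = ∑ v, ∑ u, W v u * θ u := by
    rw [Finset.sum_comm]
    apply Finset.sum_congr rfl
    intro v _
    apply Finset.sum_congr rfl
    intro u _
    rw [hsym u v]; ring
  have lhs_eq : ∑ u, ((1:ℝ) - φ u) = (Fintype.card V : ℝ) - ∑ u, φ u := by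
    rw [Finset.sum_sub_distrib]
    simp [Finset.card_univ]
  have hsumφ : ∑ v, φ v ≤ ∑ v, θ' v := Finset.sum_le_sum fun v _ => hφle v
  linarith [step1, step2.le, step3, e1.le, e2.le, lhs_eq.le]

/-- On a unit-weight instance, any feasible `θ ∈ [0,1]^V` satisfies
`‖Wθ‖₁ ≥ n + ‖θ‖₁ − OPT`. -/
theorem statement16 (V : Type*) [Fintype V] (W : V → V → ℝ)
    (hW : IsCollab W) (hU : UnitWeight W) (θ : V → ℝ)
    (hθ : ∀ v, 0 ≤ θ v ∧ θ v ≤ 1)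
    (hfeas : ∀ v, 1 ≤ ∑ u, W v u * θ u) :
    (Fintype.card V : ℝ) + (∑ v, θ v) - OPT W ≤ ∑ v, ∑ u, W v u * θ u := by
  have hne : {c : ℝ | ∃ θ' : V → ℝ, Feasible W θ' ∧ c = ∑ v, θ' v}.Nonempty :=
    ⟨∑ v, θ v, θ, ⟨fun v => (hθ v).1, hfeas⟩, rfl⟩
  have hkey : ∀ c ∈ {c : ℝ | ∃ θ' : V → ℝ, Feasible W θ' ∧ c = ∑ v, θ' v},
      (Fintype.card V : ℝ) + (∑ v, θ v) - (∑ v, ∑ u, W v u * θ u) ≤ c := by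
    rintro c ⟨θ', ⟨h0, h1⟩, rfl⟩
    linarith [key_lemma W hW hU θ hθ hfeas θ' h0 h1]
  have hOPT : (Fintype.card V : ℝ) + (∑ v, θ v) - (∑ v, ∑ u, W v u * θ u) ≤ OPT W :=
    le_csInf hne hkey
  linarith
end

section
/- Let W be a collaboration instance on a finite vertex set V of size n, and let θ : V → ℝ with θ ≥ 0 be a feasible solution (Wθ ≥ 1 coordinatewise). Then ‖Wθ‖₁ ≥ n + (‖θ‖₁ − OPT)/OPT. (Note OPT ≥ 1 > 0 since all entries of W are at most 1.) -/
open Finset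

variable {V : Type*}

/-- On a general weighted instance, any feasible `θ ≥ 0` satisfies
`‖Wθ‖₁ ≥ n + (‖θ‖₁ − OPT)/OPT`. -/
theorem statement17 (V : Type*) [Fintype V] (W : V → V → ℝ)
    (hW : IsCollab W) (θ : V → ℝ)
    (hθ : ∀ v, 0 ≤ θ v)
    (hfeas : ∀ v, 1 ≤ ∑ u, W v u * θ u) :
    (Fintype.card V : ℝ) + ((∑ v, θ v) - OPT W) / OPT W ≤ ∑ v, ∑ u, W v u * θ u := by
  obtain ⟨hsym, hbd, hdiag⟩ := hW
  rcases isEmpty_or_nonempty V with hV | hV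
  · have hset : {c : ℝ | ∃ η : V → ℝ, Feasible W η ∧ c = ∑ v, η v} = {0} := by
      ext c
      simp only [Set.mem_setOf_eq, Set.mem_singleton_iff]
      constructor
      · rintro ⟨η, _, rfl⟩; simp
      · rintro rfl
        exact ⟨fun _ => 0, ⟨fun v => (IsEmpty.false v).elim,
          fun v => (IsEmpty.false v).elim⟩, by simp⟩
    have : OPT W = 0 := by rw [OPT, hset, csInf_singleton]
    simp [this]
  · set S := ∑ v, θ v with hS
    set T := ∑ v, ∑ u, W v u * θ u with hT
    have hn : (Fintype.card V : ℝ) ≤ T := by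
      rw [hT]
      calc (Fintype.card V : ℝ) = ∑ _v : V, (1:ℝ) := by simp
      _ ≤ ∑ v, ∑ u, W v u * θ u := Finset.sum_le_sum fun v _ => hfeas v
    have hS0 : 0 ≤ S := Finset.sum_nonneg fun v _ => hθ v
    have hTn : 0 < T - Fintype.card V + 1 := by linarith
    have key : ∀ c ∈ {c : ℝ | ∃ η : V → ℝ, Feasible W η ∧ c = ∑ v, η v},
        S / (T - Fintype.card V + 1) ≤ c := by
      rintro c ⟨η, ⟨hη0, hηf⟩, rfl⟩
      set c := ∑ v, η v with hc
      have hc0 : 0 ≤ c := Finset.sum_nonneg fun v _ => hη0 v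
      have hηle : ∀ v, η v ≤ c := fun v =>
        Finset.single_le_sum (fun u _ => hη0 u) (Finset.mem_univ v)
      have hswap : S ≤ ∑ v, η v * ∑ u, W v u * θ u := by
        have heq : ∑ v, η v * ∑ u, W v u * θ u = ∑ u, θ u * ∑ v, W u v * η v := by
          simp_rw [Finset.mul_sum]
          rw [Finset.sum_comm]
          refine Finset.sum_congr rfl fun u _ => Finset.sum_congr rfl fun v _ => ?_
          rw [hsym u v]; ring
        rw [heq]
        calc S = ∑ u, θ u * 1 := by simp [hS]
        _ ≤ ∑ u, θ u * ∑ v, W u v * η v :=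
          Finset.sum_le_sum fun u _ => mul_le_mul_of_nonneg_left (hηf u) (hθ u)
      have hub : ∑ v, η v * ∑ u, W v u * θ u ≤ c * (T - Fintype.card V + 1) := by
        have h1 : ∀ v : V, η v * ∑ u, W v u * θ u ≤ c * (∑ u, W v u * θ u - 1) + η v := by
          intro v
          have h2 : 1 ≤ ∑ u, W v u * θ u := hfeas v
          nlinarith [hηle v, hη0 v]
        calc ∑ v, η v * ∑ u, W v u * θ u
            ≤ ∑ v, (c * (∑ u, W v u * θ u - 1) + η v) := Finset.sum_le_sum fun v _ => h1 v
        _ = c * (T - Fintype.card V) + c := by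
            rw [Finset.sum_add_distrib, ← Finset.mul_sum, Finset.sum_sub_distrib]
            simp [hT, hc, mul_sub]
        _ = c * (T - Fintype.card V + 1) := by ring
      rw [div_le_iff₀ hTn]
      linarith
    have hne : {c : ℝ | ∃ η : V → ℝ, Feasible W η ∧ c = ∑ v, η v}.Nonempty :=
      ⟨S, θ, ⟨hθ, hfeas⟩, rfl⟩
    have hOPT_lb : S / (T - Fintype.card V + 1) ≤ OPT W := le_csInf hne key
    obtain ⟨v0⟩ := hV
    have hOPT1 : (1:ℝ) ≤ OPT W := by
      apply le_csInf hne
      rintro x ⟨η, ⟨hη0, hηf⟩, rfl⟩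
      calc (1:ℝ) ≤ ∑ u, W v0 u * η u := hηf v0
      _ ≤ ∑ u, η u := Finset.sum_le_sum fun u _ => by
          nlinarith [(hbd v0 u).1, (hbd v0 u).2, hη0 u]
    have hO0 : 0 < OPT W := by linarith
    have hSle : S ≤ OPT W * (T - Fintype.card V + 1) := by
      rw [div_le_iff₀ hTn] at hOPT_lb
      linarith
    have : (S - OPT W) / OPT W ≤ T - Fintype.card V := by
      rw [div_le_iff₀ hO0]
      nlinarith
    linarith
end

section
/- Every finite simple graph with n vertices and m edges contains an independent set of size at least n² / (2·(4m + n)); in particular, of size Ω(min{n²/m, n}). -/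
/-!
Let `D = ⌊4m/n⌋`. By the degree-sum formula fewer than `n/2` vertices have degree above `D`, so the
vertices of degree at most `D` form a set `T` with `n ≤ 2|T|`. A maximal independent subset `S` of
`T` dominates `T`, and each of its vertices dominates at most `D + 1` vertices of `T`, so
`|T| ≤ |S|(D + 1)`. Since `n(D + 1) ≤ 4m + n`, this gives `n² ≤ 2(4m + n)|S|`.
-/

open Finset

namespace SimpleGraph

variable {V : Type*} (G : SimpleGraph V) [DecidableRel G.Adj]

lemma exists_isIndepSet_subset_card_le_card_mul (T : Finset V) (D : ℕ)
    (hD : ∀ v ∈ T, #{w ∈ T | G.Adj v w} ≤ D) :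
    ∃ S ⊆ T, G.IsIndepSet (S : Set V) ∧ #T ≤ #S * (D + 1) := by
  classical
  obtain ⟨S, hSmem, hSmax⟩ :=
    (T.powerset.filter fun S : Finset V => G.IsIndepSet (S : Set V)).exists_maximal ⟨∅, by simp⟩
  simp only [mem_filter, mem_powerset] at hSmem hSmax
  obtain ⟨hST, hS⟩ := hSmem
  have hdom : T ⊆ S.biUnion fun s => insert s {w ∈ T | G.Adj s w} := by
    intro v hv
    by_cases hvS : v ∈ S
    · exact mem_biUnion.2 ⟨v, hvS, mem_insert_self _ _⟩
    by_contra hcon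
    have hins : G.IsIndepSet ((insert v S : Finset V) : Set V) := by
      have hnadj : ∀ s ∈ S, ¬ G.Adj s v := fun s hs hsv =>
        hcon (mem_biUnion.2 ⟨s, hs, mem_insert_of_mem (mem_filter.2 ⟨hv, hsv⟩)⟩)
      rw [coe_insert, IsIndepSet, Set.pairwise_insert]
      exact ⟨hS, fun s hs _ => ⟨fun hvs => hnadj s hs hvs.symm, hnadj s hs⟩⟩
    exact hvS (hSmax ⟨insert_subset hv hST, hins⟩ (subset_insert _ _) (mem_insert_self _ _))
  refine ⟨S, hST, hS, (card_le_card hdom).trans (card_biUnion_le_card_mul _ _ _ fun s hs => ?_)⟩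
  exact (card_insert_le _ _).trans (Nat.add_le_add_right (hD s (hST hs)) 1)

variable [Fintype V]

lemma card_filter_lt_degree_mul_le (D : ℕ) :
    #{v | D < G.degree v} * (D + 1) ≤ 2 * #G.edgeFinset :=
  calc #{v | D < G.degree v} * (D + 1) ≤ ∑ v ∈ {v | D < G.degree v}, G.degree v := by
        rw [← smul_eq_mul]; exact card_nsmul_le_sum _ _ _ fun v hv => (mem_filter.1 hv).2
    _ ≤ ∑ v, G.degree v := sum_le_sum_of_subset (subset_univ _)
    _ = 2 * #G.edgeFinset := G.sum_degrees_eq_twice_card_edges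

theorem exists_isIndepSet_sq_card_le :
    ∃ S : Finset V, G.IsIndepSet (S : Set V) ∧
      Fintype.card V ^ 2 ≤ 2 * (4 * #G.edgeFinset + Fintype.card V) * #S := by
  set n := Fintype.card V
  set m := #G.edgeFinset
  rcases Nat.eq_zero_or_pos n with hn | hn
  · exact ⟨∅, by simp, by simp [hn]⟩
  set D := 4 * m / n
  obtain ⟨S, -, hS, hlow⟩ := G.exists_isIndepSet_subset_card_le_card_mul {v | G.degree v ≤ D} D
    fun v hv => (card_le_card fun w hw => by simpa using (mem_filter.1 hw).2).trans
      (mem_filter.1 hv).2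
  have hsplit : #{v | G.degree v ≤ D} + #{v | D < G.degree v} = n := by
    simpa only [not_le, card_univ] using card_filter_add_card_filter_not (s := univ) (G.degree · ≤ D)
  have hhigh := G.card_filter_lt_degree_mul_le D
  have hfloor : n * D ≤ 4 * m := Nat.mul_div_le (4 * m) n
  have hceil : 4 * m < n * (D + 1) := Nat.lt_mul_div_succ (4 * m) hn
  have hhalf : 2 * #{v | D < G.degree v} < n :=
    Nat.lt_of_mul_lt_mul_right (a := D + 1) (by linarith)
  refine ⟨S, hS, ?_⟩
  calc n ^ 2 ≤ 2 * #{v | G.degree v ≤ D} * n := by nlinarith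
    _ ≤ 2 * (#S * (D + 1)) * n := by gcongr
    _ = 2 * #S * (n * (D + 1)) := by ring
    _ ≤ 2 * #S * (4 * m + n) := by gcongr; linarith
    _ = 2 * (4 * m + n) * #S := by ring

end SimpleGraph

theorem statement19_general (V : Type*) [Fintype V] (G : SimpleGraph V)
    [DecidableRel G.Adj] :
    ∃ S : Finset V, (∀ u ∈ S, ∀ v ∈ S, ¬ G.Adj u v) ∧
      (Fintype.card V : ℝ) ^ 2 /
          (2 * (4 * (G.edgeFinset.card : ℝ) + (Fintype.card V : ℝ))) ≤ (S.card : ℝ) := by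
  obtain ⟨S, hS, hcard⟩ := G.exists_isIndepSet_sq_card_le
  refine ⟨S, fun u hu v hv => ?_, div_le_of_le_mul₀ (by positivity) (by positivity) ?_⟩
  · rcases eq_or_ne u v with rfl | huv
    · exact G.loopless.irrefl u
    · exact hS hu hv huv
  · rw [mul_comm]
    exact_mod_cast hcard

/-- Every finite simple graph with `n` vertices and `m` edges contains
an independent set of size at least `n² / (2·(4m + n))` (in particular, of size
`Ω(min{n²/m, n})`). -/
theorem statement19 (V : Type*) [Fintype V] [DecidableEq V] (G : SimpleGraph V)
    [DecidableRel G.Adj] :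
    ∃ S : Finset V, (∀ u ∈ S, ∀ v ∈ S, ¬ G.Adj u v) ∧
      (Fintype.card V : ℝ) ^ 2 /
          (2 * (4 * (G.edgeFinset.card : ℝ) + (Fintype.card V : ℝ))) ≤ (S.card : ℝ) :=
  statement19_general V G
end
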